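/- arXiv:1804.01597 — 4 statements merged into one kernel-verified Lean document; each statement's English description precedes it below -/
import Mathlib

section
/- For all integers 0 ≤ k ≤ n, the number of pairs (P, S), where P is a Dyck word of semi-length n+k+1 and S is a set of k marked UDD-patterns of P none of which contains a down-step of the final maximal run of D's of P, equals B_{n,k}. Here a UDD-pattern of P is a position i such that the letters of P at positions i, i+1, i+2 are U, D, D respectively, and the condition is that neither position i+1 nor position i+2 lies in the maximal suffix of P consisting of D's. -/
/-- Catalan's triangle: `C_{n,k} = ((n-k+1)/(n+1)) * binom(n+k, n)` (the division is exact). -/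
def catalanTriangle (n k : ℕ) : ℕ := (n - k + 1) * (n + k).choose n / (n + 1)

/-- Borel's triangle: `B_{n,k} = Σ_{s=k}^{n} binom(s,k) * C_{n,s}`. -/
def borelTriangle (n k : ℕ) : ℕ := ∑ s ∈ Finset.Icc k n, s.choose k * catalanTriangle n s

/-- A Dyck word of semi-length `m`: a word in `U = true` and `D = false` of length `2m` with
`m` `U`'s and `m` `D`'s such that every prefix has at least as many `U`'s as `D`'s. -/
def IsDyckWord (m : ℕ) (w : List Bool) : Prop :=
  w.length = 2 * m ∧ w.count true = m ∧ w.count false = m ∧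
    ∀ i, (w.take i).count false ≤ (w.take i).count true

/-- The length of the final maximal run of `D`'s of `w`; the positions
`w.length - trailingDRun w, …, w.length - 1` are exactly the positions of this run. -/
def trailingDRun (w : List Bool) : ℕ := (w.reverse.takeWhile (fun b => b = false)).length

/-- `i` is a `UDD`-pattern of `w`: positions `i, i+1, i+2` carry letters `U, D, D`. -/
def IsUDDPattern (w : List Bool) (i : ℕ) : Prop :=
  i + 2 < w.length ∧ w.getD i false = true ∧
    w.getD (i + 1) true = false ∧ w.getD (i + 2) true = false

namespace BorelAux

attribute [local instance] Classical.propDecidable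

noncomputable section

/-! ### Words of a given length as a finset -/

def allWords : ℕ → Finset (List Bool)
  | 0 => {[]}
  | n+1 => (allWords n).image (true :: ·) ∪ (allWords n).image (false :: ·)

lemma mem_allWords : ∀ {n : ℕ} {w : List Bool}, w ∈ allWords n ↔ w.length = n := by
  intro n
  induction n with
  | zero => intro w; simp [allWords, List.length_eq_zero_iff]
  | succ n ih =>
    intro w
    simp only [allWords, Finset.mem_union, Finset.mem_image]
    constructor
    · rintro (⟨t, ht, rfl⟩ | ⟨t, ht, rfl⟩) <;> simp [ih.1 ht]
    · intro hw
      match w with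
      | [] => simp at hw
      | true :: t => exact Or.inl ⟨t, ih.2 (by simpa using hw), rfl⟩
      | false :: t => exact Or.inr ⟨t, ih.2 (by simpa using hw), rfl⟩

lemma natCard_eq_filter {α : Type*} (p : α → Prop) (s : Finset α)
    (h : ∀ x, p x → x ∈ s) : Nat.card {x // p x} = (s.filter p).card := by
  rw [← Nat.card_eq_finsetCard]
  exact Nat.card_congr (Equiv.subtypeEquivRight (fun x =>
    ⟨fun hp => Finset.mem_filter.2 ⟨h x hp, hp⟩, fun hx => (Finset.mem_filter.1 hx).2⟩))

/-! ### Prefix conditions with slack -/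

def Pref (c : ℕ) (w : List Bool) : Prop :=
  ∀ i, (w.take i).count false ≤ c + (w.take i).count true

lemma Pref_nil (c : ℕ) : Pref c [] := by intro i; simp

lemma count_take_cons (b : Bool) (w : List Bool) (i : ℕ) (a : Bool) :
    ((b :: w).take (i+1)).count a = (w.take i).count a + (if b = a then 1 else 0) := by
  cases b <;> cases a <;> simp [List.count_cons]

lemma Pref_cons_true {c : ℕ} {w : List Bool} : Pref c (true :: w) ↔ Pref (c+1) w := by
  constructor
  · intro h i
    have := h (i+1)
    rw [count_take_cons, count_take_cons] at this
    simp at this; omega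
  · intro h i
    match i with
    | 0 => simp
    | i+1 =>
      have := h i
      rw [count_take_cons, count_take_cons]
      simp; omega

lemma Pref_cons_false {c : ℕ} {w : List Bool} : Pref (c+1) (false :: w) ↔ Pref c w := by
  constructor
  · intro h i
    have := h (i+1)
    rw [count_take_cons, count_take_cons] at this
    simp at this; omega
  · intro h i
    match i with
    | 0 => simp
    | i+1 =>
      have := h i
      rw [count_take_cons, count_take_cons]
      simp; omega

lemma not_Pref_zero_cons_false {w : List Bool} : ¬ Pref 0 (false :: w) := by
  intro h
  have := h 1
  simp at this

lemma Pref_mono {c c' : ℕ} {w : List Bool} (hcc : c ≤ c') (h : Pref c w) : Pref c' w :=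
  fun i => le_trans (h i) (by omega)

/-! ### Marked words, expansion, positions -/

def ex : List (Bool × Bool) → List Bool
  | [] => []
  | (b, mk) :: t => (if mk then [true, false, false] else [b]) ++ ex t

def posA : List (Bool × Bool) → Finset ℕ
  | [] => ∅
  | (_, mk) :: t => if mk then insert 0 ((posA t).image (· + 3)) else (posA t).image (· + 1)

def posB : List (Bool × Bool) → Finset ℕ
  | [] => ∅
  | (_, mk) :: t => if mk then insert 0 ((posB t).image (· + 1)) else (posB t).image (· + 1)

def nMarks (z : List (Bool × Bool)) : ℕ := z.countP (·.2)

def Inv (z : List (Bool × Bool)) : Prop := ∀ p ∈ z, p.2 = true → p.1 = false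

def EvInv : List (Bool × Bool) → Prop
  | [] => True
  | (_, mk) :: t => (mk = true → true ∈ t.map Prod.fst) ∧ EvInv t

def recomb : List Bool → Finset ℕ → List (Bool × Bool)
  | [], _ => []
  | b :: t, M => (b, 0 ∈ M) :: recomb t ((M.erase 0).image (· - 1))

def contr : List Bool → Finset ℕ → List (Bool × Bool)
  | [], _ => []
  | b :: t, S =>
    if 0 ∈ S then (false, true) :: contr (t.drop 2) ((S.erase 0).image (· - 3))
    else (b, false) :: contr t ((S.erase 0).image (· - 1))
  termination_by w _ => w.length
  decreasing_by
    · simp only [List.length_drop, List.length_cons]; omega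
    · simp


/-! ### Finset ℕ shifting helpers -/

lemma image_add_sub (s : Finset ℕ) (c : ℕ) : (s.image (· + c)).image (· - c) = s := by
  rw [Finset.image_image]
  have : ∀ x ∈ s, (((· - c) ∘ (· + c)) x) = id x := by intro x hx; simp
  rw [Finset.image_congr this, Finset.image_id]

lemma image_sub_add (s : Finset ℕ) (c : ℕ) (h : ∀ x ∈ s, c ≤ x) :
    (s.image (· - c)).image (· + c) = s := by
  rw [Finset.image_image]
  have : ∀ x ∈ s, (((· + c) ∘ (· - c)) x) = id x := by
    intro x hx; have := h x hx; simp; omega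
  rw [Finset.image_congr this, Finset.image_id]

lemma not_mem_image_add (s : Finset ℕ) (c : ℕ) (hc : 0 < c) : 0 ∉ s.image (· + c) := by
  simp; omega

/-! ### basic lemmas on ex, posA, posB, nMarks -/

@[simp] lemma ex_nil : ex [] = [] := rfl
lemma ex_cons_marked (b : Bool) (t) : ex ((b, true) :: t) = true :: false :: false :: ex t := rfl
lemma ex_cons_unmarked (b : Bool) (t) : ex ((b, false) :: t) = b :: ex t := rfl

@[simp] lemma nMarks_nil : nMarks [] = 0 := rfl
lemma nMarks_cons (b : Bool) (mk : Bool) (t) :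
    nMarks ((b, mk) :: t) = nMarks t + (if mk then 1 else 0) := by
  cases mk <;> simp [nMarks, List.countP_cons] <;> omega

lemma length_ex (z : List (Bool × Bool)) : (ex z).length = z.length + 2 * nMarks z := by
  induction z with
  | nil => simp
  | cons p t ih =>
    obtain ⟨b, mk⟩ := p
    cases mk
    · rw [ex_cons_unmarked]; simp [ih, nMarks_cons]; omega
    · rw [ex_cons_marked]; simp [ih, nMarks_cons]; omega

lemma count_ex_true (z : List (Bool × Bool)) (hz : Inv z) :
    (ex z).count true = (z.map Prod.fst).count true + nMarks z := by
  induction z with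
  | nil => simp
  | cons p t ih =>
    obtain ⟨b, mk⟩ := p
    have ht : Inv t := fun q hq => hz q (List.mem_cons_of_mem _ hq)
    cases mk
    · rw [ex_cons_unmarked]
      simp [List.count_cons, ih ht, nMarks_cons]
      cases b <;> simp <;> omega
    · have hb : b = false := hz (b, true) (List.mem_cons_self) rfl
      subst hb
      rw [ex_cons_marked]
      simp [List.count_cons, ih ht, nMarks_cons]
      omega

lemma count_ex_false (z : List (Bool × Bool)) (hz : Inv z) :
    (ex z).count false = (z.map Prod.fst).count false + nMarks z := by
  induction z with
  | nil => simp
  | cons p t ih =>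
    obtain ⟨b, mk⟩ := p
    have ht : Inv t := fun q hq => hz q (List.mem_cons_of_mem _ hq)
    cases mk
    · rw [ex_cons_unmarked]
      simp [List.count_cons, ih ht, nMarks_cons]
      cases b <;> simp <;> omega
    · have hb : b = false := hz (b, true) (List.mem_cons_self) rfl
      subst hb
      rw [ex_cons_marked]
      simp [List.count_cons, ih ht, nMarks_cons]
      omega

lemma mem_posA_marked {i : ℕ} {b : Bool} {t} :
    i ∈ posA ((b, true) :: t) ↔ i = 0 ∨ ∃ j ∈ posA t, j + 3 = i := by
  simp [posA]

lemma mem_posA_unmarked {i : ℕ} {b : Bool} {t} :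
    i ∈ posA ((b, false) :: t) ↔ ∃ j ∈ posA t, j + 1 = i := by
  simp [posA]

lemma mem_posB_marked {i : ℕ} {b : Bool} {t} :
    i ∈ posB ((b, true) :: t) ↔ i = 0 ∨ ∃ j ∈ posB t, j + 1 = i := by
  simp [posB]

lemma mem_posB_unmarked {i : ℕ} {b : Bool} {t} :
    i ∈ posB ((b, false) :: t) ↔ ∃ j ∈ posB t, j + 1 = i := by
  simp [posB]

lemma card_posA (z : List (Bool × Bool)) : (posA z).card = nMarks z := by
  induction z with
  | nil => simp [posA]
  | cons p t ih =>
    obtain ⟨b, mk⟩ := p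
    cases mk
    · simp [posA, nMarks_cons, Finset.card_image_of_injective _ (add_left_injective 1), ih]
    · simp [posA, nMarks_cons]
      rw [Finset.card_image_of_injective _ (add_left_injective 3), ih]

lemma card_posB (z : List (Bool × Bool)) : (posB z).card = nMarks z := by
  induction z with
  | nil => simp [posB]
  | cons p t ih =>
    obtain ⟨b, mk⟩ := p
    cases mk
    · simp [posB, nMarks_cons, Finset.card_image_of_injective _ (add_left_injective 1), ih]
    · simp [posB, nMarks_cons]
      rw [Finset.card_image_of_injective _ (add_left_injective 1), ih]

lemma mem_posB_lt (z : List (Bool × Bool)) {i : ℕ} (hi : i ∈ posB z) : i < z.length := by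
  induction z generalizing i with
  | nil => simp [posB] at hi
  | cons p t ih =>
    obtain ⟨b, mk⟩ := p
    cases mk
    · obtain ⟨j, hj, rfl⟩ := mem_posB_unmarked.1 hi
      have := ih hj; simp; omega
    · rcases mem_posB_marked.1 hi with rfl | ⟨j, hj, rfl⟩
      · simp
      · have := ih hj; simp; omega

lemma mem_posA_lt (z : List (Bool × Bool)) {i : ℕ} (hi : i ∈ posA z) :
    i + 2 < (ex z).length := by
  induction z generalizing i with
  | nil => simp [posA] at hi
  | cons p t ih =>
    obtain ⟨b, mk⟩ := p
    cases mk
    · obtain ⟨j, hj, rfl⟩ := mem_posA_unmarked.1 hi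
      have := ih hj
      rw [ex_cons_unmarked]; simp; omega
    · rcases mem_posA_marked.1 hi with rfl | ⟨j, hj, rfl⟩
      · rw [ex_cons_marked]; simp
      · have := ih hj
        rw [ex_cons_marked]; simp at *; omega

lemma posA_pattern (z : List (Bool × Bool)) {i : ℕ} (hi : i ∈ posA z) :
    (ex z).getD i false = true ∧ (ex z).getD (i+1) true = false ∧
      (ex z).getD (i+2) true = false := by
  induction z generalizing i with
  | nil => simp [posA] at hi
  | cons p t ih =>
    obtain ⟨b, mk⟩ := p
    cases mk
    · obtain ⟨j, hj, rfl⟩ := mem_posA_unmarked.1 hi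
      rw [ex_cons_unmarked]
      simpa [List.getD_cons_succ] using ih hj
    · rcases mem_posA_marked.1 hi with rfl | ⟨j, hj, rfl⟩
      · rw [ex_cons_marked]; simp
      · rw [ex_cons_marked]
        simpa [List.getD_cons_succ, show ∀ a, j+3+a = (j+a)+3 by omega] using ih hj


/-! ### recomb lemmas -/

lemma map_fst_recomb (Q : List Bool) (M : Finset ℕ) : (recomb Q M).map Prod.fst = Q := by
  induction Q generalizing M with
  | nil => rfl
  | cons b t ih => simp [recomb, ih]

lemma length_recomb (Q : List Bool) (M : Finset ℕ) : (recomb Q M).length = Q.length := by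
  rw [← map_fst_recomb Q M, List.length_map, map_fst_recomb]

lemma posB_recomb (Q : List Bool) (M : Finset ℕ) (h : ∀ i ∈ M, i < Q.length) :
    posB (recomb Q M) = M := by
  induction Q generalizing M with
  | nil =>
    have : M = ∅ := Finset.eq_empty_iff_forall_notMem.2 (fun i hi => by simpa using h i hi)
    simp [recomb, posB, this]
  | cons b t ih =>
    have ht : ∀ i ∈ (M.erase 0).image (· - 1), i < t.length := by
      intro i hi
      simp only [Finset.mem_image, Finset.mem_erase] at hi
      obtain ⟨j, ⟨hj0, hjM⟩, rfl⟩ := hi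
      have := h j hjM
      simp at this ⊢; omega
    have herase : ∀ x ∈ M.erase 0, 1 ≤ x := by
      intro x hx
      have := Finset.mem_erase.1 hx
      omega
    by_cases h0 : 0 ∈ M
    · have : recomb (b :: t) M = (b, true) :: recomb t ((M.erase 0).image (· - 1)) := by
        simp [recomb, h0]
      rw [this, posB, ih _ ht, image_sub_add _ _ herase]
      simp only [if_pos rfl]
      exact Finset.insert_erase h0
    · have : recomb (b :: t) M = (b, false) :: recomb t ((M.erase 0).image (· - 1)) := by
        simp [recomb, h0]
      rw [this]
      have : posB ((b, false) :: recomb t ((M.erase 0).image (· - 1)))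
          = (posB (recomb t ((M.erase 0).image (· - 1)))).image (· + 1) := by simp [posB]
      rw [this, ih _ ht, image_sub_add _ _ herase, Finset.erase_eq_of_notMem h0]

lemma recomb_map_posB (z : List (Bool × Bool)) : recomb (z.map Prod.fst) (posB z) = z := by
  induction z with
  | nil => rfl
  | cons p t ih =>
    obtain ⟨b, mk⟩ := p
    cases mk
    · have h0 : 0 ∉ posB ((b, false) :: t) := by
        rw [mem_posB_unmarked]; rintro ⟨j, hj, h⟩; omega
      have he : (posB ((b, false) :: t)).erase 0 = posB ((b, false) :: t) :=
        Finset.erase_eq_of_notMem h0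
      simp only [List.map_cons, recomb, h0, if_neg]
      rw [he]
      have : posB ((b, false) :: t) = (posB t).image (· + 1) := by simp [posB]
      rw [this, image_add_sub, ih]
      simp [h0]
    · have hpos : posB ((b, true) :: t) = insert 0 ((posB t).image (· + 1)) := by simp [posB]
      have h0 : 0 ∈ posB ((b, true) :: t) := by rw [hpos]; exact Finset.mem_insert_self _ _
      simp only [List.map_cons, recomb]
      rw [hpos, Finset.erase_insert (not_mem_image_add _ _ one_pos), image_add_sub, ih]
      simp [h0, hpos]

lemma Inv_recomb (Q : List Bool) (M : Finset ℕ) (h : ∀ i ∈ M, Q.getD i true = false) :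
    Inv (recomb Q M) := by
  induction Q generalizing M with
  | nil => intro p hp; simp [recomb] at hp
  | cons b t ih =>
    intro p hp
    simp only [recomb, List.mem_cons] at hp
    rcases hp with rfl | hp
    · intro hmk
      simp only at hmk
      have h0 : 0 ∈ M := of_decide_eq_true hmk
      simpa using h 0 h0
    · refine ih _ ?_ p hp
      intro i hi
      simp only [Finset.mem_image, Finset.mem_erase] at hi
      obtain ⟨j, ⟨hj0, hjM⟩, rfl⟩ := hi
      have := h j hjM
      obtain ⟨j', rfl⟩ : ∃ j', j = j' + 1 := ⟨j - 1, by omega⟩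
      simpa using this

/-! ### contr lemmas -/

lemma contr_cons_mem {b : Bool} {t : List Bool} {S : Finset ℕ} (h : 0 ∈ S) :
    contr (b :: t) S = (false, true) :: contr (t.drop 2) ((S.erase 0).image (· - 3)) := by
  rw [contr]; simp [h]

lemma contr_cons_not_mem {b : Bool} {t : List Bool} {S : Finset ℕ} (h : 0 ∉ S) :
    contr (b :: t) S = (b, false) :: contr t ((S.erase 0).image (· - 1)) := by
  rw [contr]; simp [h]

lemma Inv_contr (P : List Bool) (S : Finset ℕ) : Inv (contr P S) := by
  induction P, S using contr.induct with
  | case1 S => intro p hp; simp [contr] at hp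
  | case2 b t S h ih =>
    rw [contr_cons_mem h]
    intro p hp
    rcases List.mem_cons.1 hp with rfl | hp
    · exact fun _ => rfl
    · exact ih p hp
  | case3 b t S h ih =>
    rw [contr_cons_not_mem h]
    intro p hp
    rcases List.mem_cons.1 hp with rfl | hp
    · simp
    · exact ih p hp

lemma contr_ex (z : List (Bool × Bool)) (hz : Inv z) : contr (ex z) (posA z) = z := by
  induction z with
  | nil => rw [ex_nil]; rw [contr]
  | cons p t ih =>
    obtain ⟨b, mk⟩ := p
    have ht : Inv t := fun q hq => hz q (List.mem_cons_of_mem _ hq)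
    cases mk
    · have hb0 : 0 ∉ posA ((b, false) :: t) := by
        rw [mem_posA_unmarked]; rintro ⟨j, hj, h⟩; omega
      rw [ex_cons_unmarked, contr_cons_not_mem hb0]
      have : posA ((b, false) :: t) = (posA t).image (· + 1) := by simp [posA]
      rw [this, Finset.erase_eq_of_notMem (by rw [← this]; exact hb0), image_add_sub, ih ht]
    · have hb : b = false := hz (b, true) (List.mem_cons_self) rfl
      subst hb
      have hpos : posA ((false, true) :: t) = insert 0 ((posA t).image (· + 3)) := by
        simp [posA]
      have h0 : 0 ∈ posA ((false, true) :: t) := by rw [hpos]; exact Finset.mem_insert_self _ _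
      rw [ex_cons_marked, contr_cons_mem h0]
      rw [hpos, Finset.erase_insert (not_mem_image_add _ _ (by norm_num)), image_add_sub]
      simp only [List.drop_succ_cons, List.drop_zero]
      rw [ih ht]


/-! ### Pref transport along ex -/

lemma pref_ex (z : List (Bool × Bool)) (hz : Inv z) :
    ∀ c, Pref c (z.map Prod.fst) → Pref c (ex z) := by
  induction z with
  | nil => intro c h; rw [ex_nil]; exact Pref_nil c
  | cons p t ih =>
    obtain ⟨b, mk⟩ := p
    have ht : Inv t := fun q hq => hz q (List.mem_cons_of_mem _ hq)
    intro c h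
    simp only [List.map_cons] at h
    cases mk
    · rw [ex_cons_unmarked]
      cases b
      · match c with
        | 0 => exact absurd h not_Pref_zero_cons_false
        | c+1 => exact Pref_cons_false.2 (ih ht c (Pref_cons_false.1 h))
      · exact Pref_cons_true.2 (ih ht (c+1) (Pref_cons_true.1 h))
    · have hb : b = false := hz (b, true) (List.mem_cons_self) rfl
      subst hb
      rw [ex_cons_marked]
      match c with
      | 0 => exact absurd h not_Pref_zero_cons_false
      | c+1 =>
        have h' : Pref c (ex t) := ih ht c (Pref_cons_false.1 h)
        rw [Pref_cons_true, show c + 1 + 1 = (c+1)+1 from rfl, Pref_cons_false,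
          Pref_cons_false]
        exact h'

lemma pref_unex (z : List (Bool × Bool)) (hz : Inv z) :
    ∀ c, Pref c (ex z) → Pref c (z.map Prod.fst) := by
  induction z with
  | nil => intro c _; exact Pref_nil c
  | cons p t ih =>
    obtain ⟨b, mk⟩ := p
    have ht : Inv t := fun q hq => hz q (List.mem_cons_of_mem _ hq)
    intro c h
    simp only [List.map_cons]
    cases mk
    · rw [ex_cons_unmarked] at h
      cases b
      · match c with
        | 0 => exact absurd h not_Pref_zero_cons_false
        | c+1 => exact Pref_cons_false.2 (ih ht c (Pref_cons_false.1 h))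
      · exact Pref_cons_true.2 (ih ht (c+1) (Pref_cons_true.1 h))
    · have hb : b = false := hz (b, true) (List.mem_cons_self) rfl
      subst hb
      rw [ex_cons_marked] at h
      match c with
      | 0 =>
        exfalso
        rw [Pref_cons_true] at h
        rw [show (0:ℕ) + 1 = 0 + 1 from rfl, Pref_cons_false] at h
        exact not_Pref_zero_cons_false h
      | c+1 =>
        rw [Pref_cons_true, show c + 1 + 1 = (c+1)+1 from rfl, Pref_cons_false,
          Pref_cons_false] at h
        exact Pref_cons_false.2 (ih ht c h)

/-! ### getD/membership helpers -/

lemma exists_true_getD {w : List Bool} (h : true ∈ w) :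
    ∃ j, j < w.length ∧ w.getD j false = true := by
  obtain ⟨j, hj, hval⟩ := List.mem_iff_getElem.1 h
  exact ⟨j, hj, by rw [List.getD_eq_getElem w false hj, hval]⟩

lemma true_mem_of_getD {w : List Bool} {j : ℕ} (h1 : j < w.length) (h2 : w.getD j false = true) :
    true ∈ w := by
  rw [List.getD_eq_getElem w false h1] at h2
  exact h2 ▸ List.getElem_mem h1

/-! ### EvInv lemmas -/

lemma true_mem_ex {t : List (Bool × Bool)} (h : true ∈ t.map Prod.fst) : true ∈ ex t := by
  induction t with
  | nil => simp at h
  | cons p u ih =>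
    obtain ⟨b, mk⟩ := p
    simp only [List.map_cons, List.mem_cons] at h
    cases mk
    · rw [ex_cons_unmarked]
      rcases h with h | h
      · exact h ▸ List.mem_cons_self
      · exact List.mem_cons_of_mem _ (ih h)
    · rw [ex_cons_marked]
      exact List.mem_cons_self

lemma true_mem_fst_of_ex {t : List (Bool × Bool)} (he : EvInv t) (h : true ∈ ex t) :
    true ∈ t.map Prod.fst := by
  induction t with
  | nil => rw [ex_nil] at h; simp at h
  | cons p u ih =>
    obtain ⟨b, mk⟩ := p
    simp only [List.map_cons, List.mem_cons]
    obtain ⟨he1, he2⟩ := he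
    cases mk
    · rw [ex_cons_unmarked] at h
      rcases List.mem_cons.1 h with h | h
      · exact Or.inl h
      · exact Or.inr (ih he2 h)
    · exact Or.inr (he1 rfl)

def Pside (z : List (Bool × Bool)) : Prop :=
  ∀ i ∈ posA z, ∃ j, i + 2 < j ∧ j < (ex z).length ∧ (ex z).getD j false = true

def EvB (z : List (Bool × Bool)) : Prop :=
  ∀ i ∈ posB z, ∃ j, i < j ∧ j < z.length ∧ (z.map Prod.fst).getD j false = true

lemma EvInv_of_pside (z : List (Bool × Bool)) (h : Pside z) : EvInv z := by
  induction z with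
  | nil => trivial
  | cons p t ih =>
    obtain ⟨b, mk⟩ := p
    cases mk
    · have ht : EvInv t := by
        apply ih
        intro i hi
        obtain ⟨j, hj1, hj2, hj3⟩ := h (i+1) (mem_posA_unmarked.2 ⟨i, hi, rfl⟩)
        rw [ex_cons_unmarked] at hj2 hj3
        obtain ⟨j', rfl⟩ : ∃ j', j = j' + 1 := ⟨j - 1, by omega⟩
        rw [List.getD_cons_succ] at hj3
        exact ⟨j', by omega, by simpa using hj2, hj3⟩
      exact ⟨by simp, ht⟩
    · have ht : EvInv t := by
        apply ih
        intro i hi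
        obtain ⟨j, hj1, hj2, hj3⟩ := h (i+3) (mem_posA_marked.2 (Or.inr ⟨i, hi, rfl⟩))
        rw [ex_cons_marked] at hj2 hj3
        obtain ⟨j', rfl⟩ : ∃ j', j = j' + 3 := ⟨j - 3, by omega⟩
        rw [show j' + 3 = j' + 1 + 1 + 1 from rfl, List.getD_cons_succ, List.getD_cons_succ,
          List.getD_cons_succ] at hj3
        exact ⟨j', by omega, by simp at hj2; omega, hj3⟩
      refine ⟨fun _ => ?_, ht⟩
      obtain ⟨j, hj1, hj2, hj3⟩ := h 0 (mem_posA_marked.2 (Or.inl rfl))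
      rw [ex_cons_marked] at hj2 hj3
      obtain ⟨j', rfl⟩ : ∃ j', j = j' + 3 := ⟨j - 3, by omega⟩
      rw [show j' + 3 = j' + 1 + 1 + 1 from rfl, List.getD_cons_succ, List.getD_cons_succ,
        List.getD_cons_succ] at hj3
      exact true_mem_fst_of_ex ht (true_mem_of_getD (by simp at hj2; omega) hj3)

lemma pside_of_EvInv (z : List (Bool × Bool)) (h : EvInv z) : Pside z := by
  induction z with
  | nil => intro i hi; simp [posA] at hi
  | cons p t ih =>
    obtain ⟨b, mk⟩ := p
    obtain ⟨h1, h2⟩ := h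
    intro i hi
    cases mk
    · obtain ⟨j, hj, rfl⟩ := mem_posA_unmarked.1 hi
      obtain ⟨j', hj'1, hj'2, hj'3⟩ := ih h2 j hj
      rw [ex_cons_unmarked]
      exact ⟨j' + 1, by omega, by simp; omega, by rwa [List.getD_cons_succ]⟩
    · rcases mem_posA_marked.1 hi with rfl | ⟨j, hj, rfl⟩
      · obtain ⟨j0, hj0, hval⟩ := exists_true_getD (true_mem_ex (h1 rfl))
        rw [ex_cons_marked]
        refine ⟨j0 + 3, by omega, by simp; omega, ?_⟩
        rwa [show j0 + 3 = j0 + 1 + 1 + 1 from rfl, List.getD_cons_succ, List.getD_cons_succ,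
          List.getD_cons_succ]
      · obtain ⟨j', hj'1, hj'2, hj'3⟩ := ih h2 j hj
        rw [ex_cons_marked]
        refine ⟨j' + 3, by omega, by simp; omega, ?_⟩
        rwa [show j' + 3 = j' + 1 + 1 + 1 from rfl, List.getD_cons_succ, List.getD_cons_succ,
          List.getD_cons_succ]

lemma evB_of_EvInv (z : List (Bool × Bool)) (h : EvInv z) : EvB z := by
  induction z with
  | nil => intro i hi; simp [posB] at hi
  | cons p t ih =>
    obtain ⟨b, mk⟩ := p
    obtain ⟨h1, h2⟩ := h
    intro i hi
    cases mk
    · obtain ⟨j, hj, rfl⟩ := mem_posB_unmarked.1 hi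
      obtain ⟨j', hj'1, hj'2, hj'3⟩ := ih h2 j hj
      exact ⟨j' + 1, by omega, by simp; omega, by simpa [List.getD_cons_succ] using hj'3⟩
    · rcases mem_posB_marked.1 hi with rfl | ⟨j, hj, rfl⟩
      · obtain ⟨j0, hj0, hval⟩ := exists_true_getD (h1 rfl)
        rw [List.length_map] at hj0
        refine ⟨j0 + 1, by omega, by simp; omega, ?_⟩
        simpa [List.getD_cons_succ] using hval
      · obtain ⟨j', hj'1, hj'2, hj'3⟩ := ih h2 j hj
        exact ⟨j' + 1, by omega, by simp; omega, by simpa [List.getD_cons_succ] using hj'3⟩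

lemma EvInv_of_evB (z : List (Bool × Bool)) (h : EvB z) : EvInv z := by
  induction z with
  | nil => trivial
  | cons p t ih =>
    obtain ⟨b, mk⟩ := p
    have ht : EvInv t := by
      apply ih
      intro i hi
      have hmem : i + 1 ∈ posB ((b, mk) :: t) := by
        cases mk
        · exact mem_posB_unmarked.2 ⟨i, hi, rfl⟩
        · exact mem_posB_marked.2 (Or.inr ⟨i, hi, rfl⟩)
      obtain ⟨j, hj1, hj2, hj3⟩ := h (i+1) hmem
      obtain ⟨j', rfl⟩ : ∃ j', j = j' + 1 := ⟨j - 1, by omega⟩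
      simp only [List.map_cons, List.getD_cons_succ] at hj3
      exact ⟨j', by omega, by simp at hj2; omega, hj3⟩
    refine ⟨fun hmk => ?_, ht⟩
    subst hmk
    obtain ⟨j, hj1, hj2, hj3⟩ := h 0 (mem_posB_marked.2 (Or.inl rfl))
    obtain ⟨j', rfl⟩ : ∃ j', j = j' + 1 := ⟨j - 1, by omega⟩
    simp only [List.map_cons, List.getD_cons_succ] at hj3
    exact true_mem_of_getD (by simp at hj2; simpa using hj2) hj3


/-! ### trailingDRun lemmas -/

lemma takeWhile_append_of_exists {p : Bool → Bool} {l1 l2 : List Bool}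
    (h : ∃ a ∈ l1, ¬ p a) : (l1 ++ l2).takeWhile p = l1.takeWhile p := by
  rw [List.takeWhile_append]
  split
  · next heq =>
    exfalso
    obtain ⟨a, ha, hpa⟩ := h
    have : l1.takeWhile p = l1 := (List.takeWhile_prefix p).eq_of_length heq
    exact hpa (List.mem_takeWhile_imp (this ▸ ha))
  · rfl

lemma trailingDRun_le_length (w : List Bool) : trailingDRun w ≤ w.length := by
  rw [trailingDRun, show w.length = w.reverse.length from List.length_reverse.symm]
  exact List.Sublist.length_le (List.takeWhile_sublist _)

lemma trailingDRun_cons (x : Bool) (u : List Bool) (h : true ∈ u) :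
    trailingDRun (x :: u) = trailingDRun u := by
  rw [trailingDRun, trailingDRun, List.reverse_cons,
    takeWhile_append_of_exists ⟨true, by simpa using h, by simp⟩]

lemma trailingDRun_all_false (w : List Bool) (h : ∀ x ∈ w, x = false) :
    trailingDRun w = w.length := by
  rw [trailingDRun, show w.length = w.reverse.length from List.length_reverse.symm]
  congr 1
  rw [List.takeWhile_eq_self_iff]
  intro a ha
  simp [h a (List.mem_reverse.1 ha)]

lemma all_false_of_not_true_mem {w : List Bool} (h : true ∉ w) : ∀ x ∈ w, x = false := by
  intro x hx
  cases x
  · rfl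
  · exact absurd hx h

/-- The key positional characterization of the trailing run. -/
lemma lt_sub_trailing_iff (w : List Bool) (p : ℕ) :
    p < w.length - trailingDRun w ↔ ∃ j, p ≤ j ∧ j < w.length ∧ w.getD j false = true := by
  induction w generalizing p with
  | nil => simp [trailingDRun]
  | cons b t ih =>
    by_cases h : true ∈ t
    · rw [trailingDRun_cons b t h]
      have htle := trailingDRun_le_length t
      match p with
      | 0 =>
        simp only [List.length_cons]
        constructor
        · intro _
          obtain ⟨j0, hj0, hval⟩ := exists_true_getD h
          exact ⟨j0 + 1, by omega, by omega, by rwa [List.getD_cons_succ]⟩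
        · intro _
          obtain ⟨j0, hj0, hval⟩ := exists_true_getD h
          have := (ih j0).2 ⟨j0, le_refl _, hj0, hval⟩
          omega
      | p+1 =>
        rw [show (b :: t).length - trailingDRun t = (t.length - trailingDRun t) + 1 by
          simp; omega]
        constructor
        · intro hp
          obtain ⟨j, hj1, hj2, hj3⟩ := (ih p).1 (by omega)
          exact ⟨j + 1, by omega, by simp; omega, by rwa [List.getD_cons_succ]⟩
        · rintro ⟨j, hj1, hj2, hj3⟩
          obtain ⟨j', rfl⟩ : ∃ j', j = j' + 1 := ⟨j - 1, by omega⟩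
          rw [List.getD_cons_succ] at hj3
          have := (ih p).2 ⟨j', by omega, by simpa using hj2, hj3⟩
          omega
    · have hall : ∀ x ∈ t, x = false := all_false_of_not_true_mem h
      cases b
      · have : trailingDRun (false :: t) = (false :: t).length :=
          trailingDRun_all_false _ (by
            intro x hx
            rcases List.mem_cons.1 hx with rfl | hx
            · rfl
            · exact hall x hx)
        rw [this]
        simp only [Nat.sub_self]
        constructor
        · omega
        · rintro ⟨j, hj1, hj2, hj3⟩
          match j with
          | 0 => simp at hj3
          | j+1 =>
            rw [List.getD_cons_succ] at hj3
            have := hall _ (true_mem_of_getD (by simpa using hj2) hj3)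
            simp at this
      · have htr : trailingDRun (true :: t) = t.length := by
          rw [trailingDRun, List.reverse_cons, List.takeWhile_append]
          rw [if_pos]
          · simp
          · congr 1
            rw [List.takeWhile_eq_self_iff]
            intro a ha
            simp [hall a (List.mem_reverse.1 ha)]
        rw [htr]
        simp only [List.length_cons, Nat.add_sub_cancel_left]
        constructor
        · intro hp
          have : p = 0 := by omega
          subst this
          exact ⟨0, le_refl _, by simp, by simp⟩
        · rintro ⟨j, hj1, hj2, hj3⟩
          match j with
          | 0 => omega
          | j+1 =>
            rw [List.getD_cons_succ] at hj3
            have := hall _ (true_mem_of_getD (by simpa using hj2) hj3)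
            simp at this


/-! ### contraction soundness -/

lemma contr_sound (P : List Bool) (S : Finset ℕ)
    (hS : ∀ i ∈ S, IsUDDPattern P i ∧ i + 2 < P.length - trailingDRun P) :
    ex (contr P S) = P ∧ posA (contr P S) = S := by
  induction P, S using contr.induct with
  | case1 S =>
    have hSe : S = ∅ := by
      refine Finset.eq_empty_iff_forall_notMem.2 (fun i hi => ?_)
      have := (hS i hi).1.1
      simp at this
    subst hSe
    rw [contr]
    exact ⟨rfl, rfl⟩
  | case2 b t S h0 ih =>
    match t with
    | [] => exact absurd (hS 0 h0).1.1 (by simp)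
    | [c] => exact absurd (hS 0 h0).1.1 (by simp)
    | c :: d :: u =>
      obtain ⟨⟨hlen0, hb, hc, hd⟩, helig0⟩ := hS 0 h0
      simp only [List.getD_cons_zero, List.getD_cons_succ] at hb hc hd
      subst hb; subst hc; subst hd
      have heq3 : ∀ j ∈ S.erase 0, 3 ≤ j := by
        intro j hj
        obtain ⟨hj0, hjS⟩ := Finset.mem_erase.1 hj
        by_contra hlt
        interval_cases j
        · exact hj0 rfl
        · have := (hS 1 hjS).1.2.1
          simp at this
        · have := (hS 2 hjS).1.2.1
          simp at this
      -- true occurs in u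
      have htrue : true ∈ u := by
        obtain ⟨j, hj1, hj2, hj3⟩ :=
          (lt_sub_trailing_iff (true :: false :: false :: u) 2).1 (by omega)
        have hj2' : j ≠ 2 := fun h => by subst h; simp at hj3
        obtain ⟨j', rfl⟩ : ∃ j', j = j' + 3 := ⟨j - 3, by omega⟩
        rw [show j' + 3 = j' + 1 + 1 + 1 from rfl, List.getD_cons_succ, List.getD_cons_succ,
          List.getD_cons_succ] at hj3
        exact true_mem_of_getD (by simp at hj2; omega) hj3
      have htr : trailingDRun (true :: false :: false :: u) = trailingDRun u := by
        rw [trailingDRun_cons _ _ (by simp [htrue]), trailingDRun_cons _ _ (by simp [htrue]),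
          trailingDRun_cons _ _ htrue]
      have htu := trailingDRun_le_length u
      have hS' : ∀ i ∈ (S.erase 0).image (· - 3),
          IsUDDPattern u i ∧ i + 2 < u.length - trailingDRun u := by
        intro i hi
        obtain ⟨j, hj, rfl⟩ := Finset.mem_image.1 hi
        have h3j := heq3 j hj
        obtain ⟨⟨hl, g0, g1, g2⟩, gelig⟩ := hS j (Finset.mem_erase.1 hj).2
        obtain ⟨j', rfl⟩ : ∃ j', j = j' + 3 := ⟨j - 3, by omega⟩
        rw [show j' + 3 = j' + 1 + 1 + 1 from rfl, List.getD_cons_succ, List.getD_cons_succ,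
          List.getD_cons_succ] at g0
        rw [show j' + 3 + 1 = (j' + 1) + 1 + 1 + 1 from rfl, List.getD_cons_succ,
          List.getD_cons_succ, List.getD_cons_succ] at g1
        rw [show j' + 3 + 2 = (j' + 2) + 1 + 1 + 1 from rfl, List.getD_cons_succ,
          List.getD_cons_succ, List.getD_cons_succ] at g2
        have hul : (true :: false :: false :: u).length = u.length + 3 := by simp
        refine ⟨⟨?_, ?_, ?_, ?_⟩, ?_⟩
        · simp only [Nat.add_sub_cancel]; rw [hul] at hl; omega
        · simpa using g0
        · simpa [show j' + 3 - 3 + 1 = j' + 1 from by omega] using g1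
        · simpa [show j' + 3 - 3 + 2 = j' + 2 from by omega] using g2
        · rw [htr, hul] at gelig
          simp only [Nat.add_sub_cancel]
          omega
      simp only [List.drop_succ_cons, List.drop_zero] at ih
      obtain ⟨ihe, ihp⟩ := ih hS'
      constructor
      · rw [contr_cons_mem h0, ex_cons_marked]
        simp only [List.drop_succ_cons, List.drop_zero]
        rw [ihe]
      · rw [contr_cons_mem h0]
        simp only [List.drop_succ_cons, List.drop_zero, posA, if_pos]
        rw [ihp, image_sub_add _ _ heq3, Finset.insert_erase h0]
  | case3 b t S h0 ih =>
    have hge1 : ∀ j ∈ S, 1 ≤ j := by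
      intro j hj
      rcases Nat.eq_zero_or_pos j with rfl | h
      · exact absurd hj h0
      · exact h
    have hS' : ∀ i ∈ (S.erase 0).image (· - 1),
        IsUDDPattern t i ∧ i + 2 < t.length - trailingDRun t := by
      intro i hi
      obtain ⟨j, hj, rfl⟩ := Finset.mem_image.1 hi
      have hjS := (Finset.mem_erase.1 hj).2
      have h1j := hge1 j hjS
      obtain ⟨⟨hl, g0, g1, g2⟩, gelig⟩ := hS j hjS
      obtain ⟨j', rfl⟩ : ∃ j', j = j' + 1 := ⟨j - 1, by omega⟩
      rw [List.getD_cons_succ] at g0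
      rw [show j' + 1 + 1 = (j' + 1) + 1 from rfl, List.getD_cons_succ] at g1
      rw [show j' + 1 + 2 = (j' + 2) + 1 from rfl, List.getD_cons_succ] at g2
      have htrue : true ∈ t := by
        refine true_mem_of_getD (j := j') ?_ g0
        simp at hl; omega
      have htr : trailingDRun (b :: t) = trailingDRun t := trailingDRun_cons _ _ htrue
      rw [htr] at gelig
      simp only [Nat.add_sub_cancel]
      refine ⟨⟨by simp at hl; omega, g0, ?_, ?_⟩, by simp at gelig ⊢; omega⟩
      · simpa [show j' + 1 - 1 + 1 = j' + 1 from by omega] using g1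
      · simpa [show j' + 1 - 1 + 2 = j' + 2 from by omega] using g2
    obtain ⟨ihe, ihp⟩ := ih hS'
    constructor
    · rw [contr_cons_not_mem h0, ex_cons_unmarked, ihe]
    · rw [contr_cons_not_mem h0]
      have hpa : posA ((b, false) :: contr t ((S.erase 0).image (· - 1)))
          = (posA (contr t ((S.erase 0).image (· - 1)))).image (· + 1) := by simp [posA]
      rw [hpa, ihp, image_sub_add _ _ (fun x hx => hge1 x (Finset.mem_of_mem_erase hx)),
        Finset.erase_eq_of_notMem h0]


lemma getD_fst_of_posB {z : List (Bool × Bool)} (hz : Inv z) {i : ℕ} (hi : i ∈ posB z) :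
    (z.map Prod.fst).getD i true = false := by
  induction z generalizing i with
  | nil => simp [posB] at hi
  | cons p t ih =>
    obtain ⟨b, mk⟩ := p
    have ht : Inv t := fun q hq => hz q (List.mem_cons_of_mem _ hq)
    cases mk
    · obtain ⟨j, hj, rfl⟩ := mem_posB_unmarked.1 hi
      simpa [List.getD_cons_succ] using ih ht hj
    · rcases mem_posB_marked.1 hi with rfl | ⟨j, hj, rfl⟩
      · simpa using hz (b, true) (List.mem_cons_self) rfl
      · simpa [List.getD_cons_succ] using ih ht hj

lemma getD_flip {w : List Bool} {i : ℕ} (h : i < w.length) (d d' : Bool) :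
    w.getD i d = w.getD i d' := by
  rw [List.getD_eq_getElem w d h, List.getD_eq_getElem w d' h]

/-! ### the two finsets -/

def condA (n k : ℕ) (p : List Bool × Finset ℕ) : Prop :=
  IsDyckWord (n + k + 1) p.1 ∧ p.2.card = k ∧ ∀ i ∈ p.2, IsUDDPattern p.1 i ∧
    i + 1 < p.1.length - trailingDRun p.1 ∧ i + 2 < p.1.length - trailingDRun p.1

def condB (n k : ℕ) (p : List Bool × Finset ℕ) : Prop :=
  IsDyckWord (n + 1) p.1 ∧ p.2.card = k ∧ ∀ i ∈ p.2, p.1.getD i true = false ∧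
    i < p.1.length - trailingDRun p.1

def setA (n k : ℕ) : Finset (List Bool × Finset ℕ) :=
  ((allWords (2*(n+k+1))) ×ˢ (Finset.range (2*(n+k+1))).powerset).filter (condA n k)

def setB (n k : ℕ) : Finset (List Bool × Finset ℕ) :=
  ((allWords (2*(n+1))) ×ˢ (Finset.range (2*(n+1))).powerset).filter (condB n k)

lemma card_setB_eq_setA (n k : ℕ) : (setB n k).card = (setA n k).card := by
  refine Finset.card_bij'
    (fun p _ => (ex (recomb p.1 p.2), posA (recomb p.1 p.2)))
    (fun p _ => ((contr p.1 p.2).map Prod.fst, posB (contr p.1 p.2)))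
    ?_ ?_ ?_ ?_
  · -- maps setB into setA
    rintro ⟨Q, M⟩ hQM
    obtain ⟨hbase, ⟨hlen, hct, hcf, hpref⟩, hcard, hcond⟩ := Finset.mem_filter.1 hQM
    dsimp only at hlen hct hcf hpref hcard hcond
    set z := recomb Q M with hz
    have hMlt : ∀ i ∈ M, i < Q.length := by
      intro i hi
      have := (hcond i hi).2
      have := trailingDRun_le_length Q
      omega
    have hInv : Inv z := Inv_recomb Q M (fun i hi => (hcond i hi).1)
    have hfst : z.map Prod.fst = Q := map_fst_recomb Q M
    have hposB : posB z = M := posB_recomb Q M hMlt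
    have hnM : nMarks z = k := by rw [← card_posB, hposB, hcard]
    have hPlen : (ex z).length = 2*(n+k+1) := by
      rw [length_ex, hnM, length_recomb, hlen]; ring
    have hEv : EvInv z := by
      apply EvInv_of_evB
      intro i hi
      rw [hposB] at hi
      obtain ⟨j, hj1, hj2, hj3⟩ := (lt_sub_trailing_iff Q i).1 (hcond i hi).2
      have hne : j ≠ i := by
        intro h; subst h
        rw [getD_flip hj2 false true, (hcond j hi).1] at hj3
        simp at hj3
      exact ⟨j, by omega, by rwa [length_recomb], by rwa [hfst]⟩
    have hPside := pside_of_EvInv z hEv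
    rw [setA, Finset.mem_filter]
    refine ⟨Finset.mem_product.2 ⟨mem_allWords.2 hPlen, ?_⟩, ?_, ?_, ?_⟩
    · rw [Finset.mem_powerset]
      intro i hi
      have := mem_posA_lt z hi
      rw [Finset.mem_range]
      omega
    · refine ⟨hPlen, ?_, ?_, ?_⟩
      · rw [count_ex_true z hInv, hfst, hct, hnM]; ring
      · rw [count_ex_false z hInv, hfst, hcf, hnM]; ring
      · have := pref_ex z hInv 0 (by rw [hfst]; intro i; simpa using hpref i)
        intro i; simpa using this i
    · rw [card_posA, hnM]
    · intro i hi
      obtain ⟨g0, g1, g2⟩ := posA_pattern z hi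
      have hlt := mem_posA_lt z hi
      obtain ⟨j, hj1, hj2, hj3⟩ := hPside i hi
      have helig : i + 2 < (ex z).length - trailingDRun (ex z) :=
        (lt_sub_trailing_iff (ex z) (i+2)).2 ⟨j, by omega, hj2, hj3⟩
      refine ⟨⟨hlt, g0, g1, g2⟩, ?_, ?_⟩ <;> (dsimp only; omega)
  · -- maps setA into setB
    rintro ⟨P, S⟩ hPS
    obtain ⟨hbase, ⟨hlen, hct, hcf, hpref⟩, hcard, hcond⟩ := Finset.mem_filter.1 hPS
    dsimp only at hlen hct hcf hpref hcard hcond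
    set z := contr P S with hz
    have hInv : Inv z := Inv_contr P S
    obtain ⟨hex, hposA⟩ := contr_sound P S (fun i hi => ⟨(hcond i hi).1, (hcond i hi).2.2⟩)
    have hnM : nMarks z = k := by rw [← card_posA, hposA, hcard]
    have hzlen : z.length = 2*(n+1) := by
      have := length_ex z
      rw [hex, hlen, hnM] at this
      omega
    have hPside : Pside z := by
      intro i hi
      rw [hposA] at hi
      obtain ⟨⟨hl, g0, g1, g2⟩, _, helig⟩ := hcond i hi
      obtain ⟨j, hj1, hj2, hj3⟩ := (lt_sub_trailing_iff P (i+2)).1 helig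
      have hne : j ≠ i + 2 := by
        intro h; subst h
        rw [getD_flip hj2 false true, g2] at hj3
        simp at hj3
      rw [hex]
      exact ⟨j, by omega, hj2, hj3⟩
    have hEv : EvInv z := EvInv_of_pside z hPside
    have hEvB := evB_of_EvInv z hEv
    rw [setB, Finset.mem_filter]
    refine ⟨Finset.mem_product.2 ⟨mem_allWords.2 (by simp [hzlen]), ?_⟩, ?_, ?_, ?_⟩
    · rw [Finset.mem_powerset]
      intro i hi
      have := mem_posB_lt z hi
      rw [Finset.mem_range, ← hzlen]
      omega
    · refine ⟨by simp [hzlen], ?_, ?_, ?_⟩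
      · have := count_ex_true z hInv
        rw [hex, hct, hnM] at this
        dsimp only; omega
      · have := count_ex_false z hInv
        rw [hex, hcf, hnM] at this
        dsimp only; omega
      · have := pref_unex z hInv 0 (by rw [hex]; intro i; simpa using hpref i)
        intro i; simpa using this i
    · rw [card_posB, hnM]
    · intro i hi
      refine ⟨getD_fst_of_posB hInv hi, ?_⟩
      obtain ⟨j, hj1, hj2, hj3⟩ := hEvB i hi
      refine (lt_sub_trailing_iff (z.map Prod.fst) i).2 ⟨j, by omega, ?_, hj3⟩
      rwa [List.length_map]
  · -- left inverse
    rintro ⟨Q, M⟩ hQM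
    obtain ⟨hbase, ⟨hlen, hct, hcf, hpref⟩, hcard, hcond⟩ := Finset.mem_filter.1 hQM
    dsimp only at hlen hct hcf hpref hcard hcond
    have hMlt : ∀ i ∈ M, i < Q.length := by
      intro i hi
      have := (hcond i hi).2
      have := trailingDRun_le_length Q
      omega
    have hInv : Inv (recomb Q M) := Inv_recomb Q M (fun i hi => (hcond i hi).1)
    have h1 := contr_ex (recomb Q M) hInv
    dsimp only
    rw [h1, map_fst_recomb, posB_recomb Q M hMlt]
  · -- right inverse
    rintro ⟨P, S⟩ hPS
    obtain ⟨hbase, ⟨hlen, hct, hcf, hpref⟩, hcard, hcond⟩ := Finset.mem_filter.1 hPS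
    dsimp only at hlen hct hcf hpref hcard hcond
    obtain ⟨hex, hposA⟩ := contr_sound P S (fun i hi => ⟨(hcond i hi).1, (hcond i hi).2.2⟩)
    dsimp only
    rw [recomb_map_posB, hex, hposA]


/-! ### more trailing run structure -/

lemma drop_trailing (w : List Bool) :
    w.drop (w.length - trailingDRun w) = List.replicate (trailingDRun w) false := by
  set y := (w.reverse.dropWhile (fun b => b = false)).reverse with hy
  set t := (w.reverse.takeWhile (fun b => b = false)).reverse with ht2
  have hw : w = y ++ t := by
    have hsplit : List.takeWhile (fun b => decide (b = false)) w.reverse ++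
        List.dropWhile (fun b => decide (b = false)) w.reverse = w.reverse :=
      List.takeWhile_append_dropWhile ..
    rw [hy, ht2, ← List.reverse_append, hsplit, List.reverse_reverse]
  have htk : t = List.replicate (trailingDRun w) false := by
    rw [List.eq_replicate_iff]
    constructor
    · rw [ht2]; simp [trailingDRun]
    · intro b hb
      rw [ht2] at hb
      have := List.mem_takeWhile_imp (List.mem_reverse.1 hb)
      simpa using this
  have hlen : w.length = y.length + trailingDRun w := by
    conv_lhs => rw [hw]
    rw [List.length_append, htk, List.length_replicate]
  have harg : w.length - trailingDRun w = y.length := by omega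
  rw [harg]
  conv_lhs => rw [hw]
  rw [List.drop_left, htk]

lemma count_true_add_count_false (w : List Bool) : w.count true + w.count false = w.length := by
  induction w with
  | nil => simp
  | cons b t ih => cases b <;> simp [List.count_cons] <;> omega

lemma trailing_le_count (w : List Bool) : trailingDRun w ≤ w.count false := by
  have h1 := drop_trailing w
  have h2 : w.count false = (w.take (w.length - trailingDRun w)).count false
      + (w.drop (w.length - trailingDRun w)).count false := by
    rw [← List.count_append, List.take_append_drop]
  rw [h1] at h2
  simp at h2
  omega

lemma getD_before_trailing (w : List Bool) (h : trailingDRun w < w.length) :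
    w.getD (w.length - trailingDRun w - 1) false = true := by
  obtain ⟨j, hj1, hj2, hj3⟩ := (lt_sub_trailing_iff w (w.length - trailingDRun w - 1)).1 (by omega)
  rcases Nat.lt_or_ge j (w.length - trailingDRun w) with hlt | hge
  · have : j = w.length - trailingDRun w - 1 := by omega
    rwa [this] at hj3
  · exfalso
    have hrep := drop_trailing w
    have : w.getD j false = (w.drop (w.length - trailingDRun w)).getD
        (j - (w.length - trailingDRun w)) false := by
      rw [List.getD_eq_getElem w false hj2, List.getD_eq_getElem _ false
        (by rw [List.length_drop]; omega), List.getElem_drop]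
      congr 1
      omega
    rw [hj3, hrep] at this
    rw [List.getD_eq_getElem _ false (by simp; omega)] at this
    simp at this

lemma take_decomp (w : List Bool) {c : ℕ} (hc : c < w.length) (hval : w.getD c false = true) :
    w = w.take c ++ true :: w.drop (c+1) := by
  conv_lhs => rw [← List.take_append_drop c w]
  congr 1
  rw [List.drop_eq_getElem_cons hc]
  congr 1
  rw [List.getD_eq_getElem w false hc] at hval
  exact hval

/-! ### Pref append lemmas -/

lemma Pref_append {w v : List Bool} : ∀ c d, Pref c w → Pref d v →
    c + w.count true = d + w.count false → Pref c (w ++ v) := by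
  induction w with
  | nil =>
    intro c d hw hv hcd
    simp at hcd
    subst hcd
    simpa using hv
  | cons b t ih =>
    intro c d hw hv hcd
    cases b
    · match c with
      | 0 => exact absurd hw not_Pref_zero_cons_false
      | c+1 =>
        rw [List.cons_append, Pref_cons_false]
        refine ih c d (Pref_cons_false.1 hw) hv ?_
        simp [List.count_cons] at hcd
        omega
    · rw [List.cons_append, Pref_cons_true]
      refine ih (c+1) d (Pref_cons_true.1 hw) hv ?_
      simp [List.count_cons] at hcd
      omega

lemma Pref_replicate_false {c r : ℕ} (h : r ≤ c) : Pref c (List.replicate r false) := by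
  intro i
  rw [List.take_replicate]
  simp
  omega

lemma Pref_take {c : ℕ} {w : List Bool} (h : Pref c w) (m : ℕ) : Pref c (w.take m) := by
  intro i
  rw [List.take_take]
  exact h _

lemma trailingDRun_append_true_rep (w : List Bool) (r : ℕ) :
    trailingDRun (w ++ true :: List.replicate r false) = r := by
  rw [trailingDRun, List.reverse_append, List.reverse_cons, List.reverse_replicate,
    List.append_assoc, List.takeWhile_append]
  rw [if_pos (by rw [List.takeWhile_eq_self_iff.2 (by intro a ha; simpa using
    (List.eq_of_mem_replicate ha))])]
  simp

/-! ### the Dyck finset and fiberwise count -/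

def dyckQ (n : ℕ) : Finset (List Bool) := (allWords (2*(n+1))).filter (IsDyckWord (n+1))

def eligSet (n : ℕ) (Q : List Bool) : Finset ℕ :=
  (Finset.range (2*(n+1))).filter
    (fun i => Q.getD i true = false ∧ i < Q.length - trailingDRun Q)

lemma card_setB_sum (n k : ℕ) :
    (setB n k).card = ∑ Q ∈ dyckQ n, ((eligSet n Q).card.choose k) := by
  rw [Finset.card_eq_sum_card_fiberwise (f := Prod.fst) (t := dyckQ n) (by
    rintro ⟨Q, M⟩ hQM
    obtain ⟨hbase, hdyck, _, _⟩ := Finset.mem_filter.1 hQM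
    exact Finset.mem_filter.2 ⟨(Finset.mem_product.1 hbase).1, hdyck⟩)]
  refine Finset.sum_congr rfl (fun Q hQ => ?_)
  rw [← Finset.card_powersetCard k (eligSet n Q)]
  refine Finset.card_bij' (fun p _ => p.2) (fun M _ => (Q, M)) ?_ ?_ ?_ ?_
  · rintro ⟨Q', M⟩ hp
    obtain ⟨hmem, hQ'⟩ := Finset.mem_filter.1 hp
    dsimp only at hQ'
    subst hQ'
    obtain ⟨hbase, hdyck, hcard, hcond⟩ := Finset.mem_filter.1 hmem
    dsimp only at hdyck hcard hcond ⊢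
    rw [Finset.mem_powersetCard]
    refine ⟨fun i hi => ?_, hcard⟩
    rw [eligSet, Finset.mem_filter, Finset.mem_range]
    obtain ⟨h1, h2⟩ := hcond i hi
    have := trailingDRun_le_length Q'
    have hlen := hdyck.1
    exact ⟨by omega, h1, h2⟩
  · intro M hM
    obtain ⟨hsub, hcard⟩ := Finset.mem_powersetCard.1 hM
    obtain ⟨hQw, hQd⟩ := Finset.mem_filter.1 hQ
    rw [Finset.mem_filter]
    refine ⟨Finset.mem_filter.2 ⟨Finset.mem_product.2 ⟨hQw, ?_⟩, hQd, hcard, ?_⟩, rfl⟩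
    · rw [Finset.mem_powerset]
      intro i hi
      exact (Finset.mem_filter.1 (hsub hi)).1
    · intro i hi
      have := (Finset.mem_filter.1 (hsub hi)).2
      exact this
  · rintro ⟨Q', M⟩ hp
    obtain ⟨_, hQ'⟩ := Finset.mem_filter.1 hp
    dsimp only at hQ' ⊢
    rw [hQ']
  · intro M _
    rfl

lemma card_eligSet (n : ℕ) {Q : List Bool} (hQ : Q ∈ dyckQ n) :
    (eligSet n Q).card = n + 1 - trailingDRun Q := by
  obtain ⟨hQw, hlen, hct, hcf, hpref⟩ := Finset.mem_filter.1 hQ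
  -- card of filtered range equals count of falses in the take
  have key : ∀ (w : List Bool) (c : ℕ), c ≤ w.length →
      ((Finset.range c).filter (fun i => w.getD i true = false)).card
        = (w.take c).count false := by
    intro w c hc
    induction c with
    | zero => simp
    | succ c ih =>
      rw [Finset.range_add_one, Finset.filter_insert]
      have hc' : c ≤ w.length := by omega
      have htk : (w.take (c+1)).count false
          = (w.take c).count false + (if w.getD c true = false then 1 else 0) := by
        have hget : w.getD c true = w[c] := List.getD_eq_getElem w true (by omega)
        rw [List.take_succ, List.getElem?_eq_getElem (show c < w.length by omega), hget]
        cases hwc : w[c] <;> simp [hwc, List.count_append]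
      rw [htk, ← ih hc']
      split
      · rw [Finset.card_insert_of_notMem (by simp)]
      · omega
  have helig : eligSet n Q = (Finset.range (Q.length - trailingDRun Q)).filter
      (fun i => Q.getD i true = false) := by
    ext i
    rw [eligSet, Finset.mem_filter, Finset.mem_filter, Finset.mem_range, Finset.mem_range]
    have := trailingDRun_le_length Q
    constructor
    · rintro ⟨h1, h2, h3⟩; exact ⟨h3, h2⟩
    · rintro ⟨h1, h2⟩; exact ⟨by omega, h2, h1⟩
  rw [helig, key Q _ (by omega)]
  have hdrop := drop_trailing Q
  have hsum : Q.count false = (Q.take (Q.length - trailingDRun Q)).count false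
      + (Q.drop (Q.length - trailingDRun Q)).count false := by
    rw [← List.count_append, List.take_append_drop]
  rw [hdrop] at hsum
  simp at hsum
  omega


/-! ### ballot words -/

def ballotF (a b : ℕ) : Finset (List Bool) :=
  (allWords (a+b)).filter (fun w => w.count true = a ∧ w.count false = b ∧ Pref 0 w)

lemma mem_ballotF {a b : ℕ} {w : List Bool} : w ∈ ballotF a b ↔
    w.length = a + b ∧ w.count true = a ∧ w.count false = b ∧ Pref 0 w := by
  rw [ballotF, Finset.mem_filter, mem_allWords]

lemma card_trailing_class (n s : ℕ) (hs : s ≤ n) :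
    ((dyckQ n).filter (fun Q => trailingDRun Q = n + 1 - s)).card = (ballotF n s).card := by
  have hdecomp : ∀ Q ∈ (dyckQ n).filter (fun Q => trailingDRun Q = n + 1 - s),
      Q = Q.take (n+s) ++ true :: List.replicate (n+1-s) false := by
    intro Q hQ
    obtain ⟨hQd, htr⟩ := Finset.mem_filter.1 hQ
    obtain ⟨hQw, hlen, hct, hcf, hpref⟩ := Finset.mem_filter.1 hQd
    have hr1 : trailingDRun Q < Q.length := by
      rw [htr, hlen]; omega
    have hget := getD_before_trailing Q hr1
    have hc : Q.length - trailingDRun Q - 1 = n + s := by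
      rw [htr, hlen]; omega
    rw [hc] at hget
    have hdrop := drop_trailing Q
    rw [htr] at hdrop
    have hc2 : Q.length - (n+1-s) = n + s + 1 := by rw [hlen]; omega
    rw [hc2] at hdrop
    conv_lhs => rw [take_decomp Q (show n + s < Q.length by omega) hget]
    rw [hdrop]
  refine Finset.card_bij' (fun Q _ => Q.take (n+s))
    (fun w _ => w ++ true :: List.replicate (n+1-s) false) ?_ ?_ ?_ ?_
  · intro Q hQ
    obtain ⟨hQd, htr⟩ := Finset.mem_filter.1 hQ
    obtain ⟨hQw, hlen, hct, hcf, hpref⟩ := Finset.mem_filter.1 hQd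
    have hdec := hdecomp Q hQ
    rw [mem_ballotF]
    have hlt : (Q.take (n+s)).length = n + s := by
      rw [List.length_take]; rw [hlen]; omega
    have hctt : Q.count true = (Q.take (n+s)).count true + 1 := by
      conv_lhs => rw [hdec]
      rw [List.count_append]
      simp [List.count_cons, List.count_replicate]
    have hcft : Q.count false = (Q.take (n+s)).count false + (n+1-s) := by
      conv_lhs => rw [hdec]
      rw [List.count_append]
      simp [List.count_cons, List.count_replicate]
    refine ⟨hlt, by omega, by omega, Pref_take (by intro i; simpa using hpref i) _⟩
  · intro w hw
    obtain ⟨hwl, hwt, hwf, hwp⟩ := mem_ballotF.1 hw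
    rw [Finset.mem_filter]
    have hlen2 : (w ++ true :: List.replicate (n+1-s) false).length = 2*(n+1) := by
      simp [hwl]; omega
    refine ⟨Finset.mem_filter.2 ⟨mem_allWords.2 hlen2, hlen2, ?_, ?_, ?_⟩,
      trailingDRun_append_true_rep w (n+1-s)⟩
    · rw [List.count_append, hwt]; simp [List.count_cons, List.count_replicate]
    · rw [List.count_append, hwf]; simp [List.count_cons, List.count_replicate]; omega
    · intro i
      have : Pref 0 (w ++ true :: List.replicate (n+1-s) false) := by
        refine Pref_append 0 (n - s) hwp ?_ (by omega)
        rw [Pref_cons_true]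
        exact Pref_replicate_false (by omega)
      simpa using this i
  · intro Q hQ
    exact (hdecomp Q hQ).symm
  · intro w hw
    obtain ⟨hwl, _, _, _⟩ := mem_ballotF.1 hw
    exact List.take_left' hwl


lemma ballot_empty (a b : ℕ) (h : a < b) : ballotF a b = ∅ := by
  refine Finset.eq_empty_iff_forall_notMem.2 (fun w hw => ?_)
  obtain ⟨hwl, hwt, hwf, hwp⟩ := mem_ballotF.1 hw
  have := hwp (a+b)
  rw [← hwl, List.take_length] at this
  omega

lemma ballot_zero (a : ℕ) : ballotF a 0 = {List.replicate a true} := by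
  ext w
  rw [mem_ballotF, Finset.mem_singleton]
  constructor
  · rintro ⟨hwl, hwt, hwf, hwp⟩
    rw [List.eq_replicate_iff]
    refine ⟨by omega, fun b hb => ?_⟩
    cases b
    · exact absurd hb (List.count_eq_zero.1 hwf)
    · rfl
  · rintro rfl
    refine ⟨by simp, by simp, ?_, fun i => ?_⟩
    · simp [List.count_replicate]
    · rw [List.take_replicate]
      simp [List.count_replicate]

lemma ballot_rec (a b : ℕ) (hb : b ≤ a) :
    (ballotF (a+1) (b+1)).card = (ballotF a (b+1)).card + (ballotF (a+1) b).card := by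
  have hsplit : ballotF (a+1) (b+1)
      = (ballotF a (b+1)).image (· ++ [true]) ∪ (ballotF (a+1) b).image (· ++ [false]) := by
    ext w
    simp only [Finset.mem_union, Finset.mem_image]
    constructor
    · intro hw
      obtain ⟨hwl, hwt, hwf, hwp⟩ := mem_ballotF.1 hw
      have hne : w ≠ [] := by intro h; rw [h] at hwl; simp at hwl
      have hdec : w.dropLast ++ [w.getLast hne] = w := List.dropLast_append_getLast hne
      have hdl : w.dropLast = w.take (w.length - 1) := by
        rw [List.dropLast_eq_take]
      have hpd : Pref 0 w.dropLast := by rw [hdl]; exact Pref_take hwp _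
      have hld : w.dropLast.length = a + b + 1 := by
        rw [List.length_dropLast, hwl]; omega
      have hcnt : ∀ x : Bool, w.count x = w.dropLast.count x + [w.getLast hne].count x := by
        intro x
        conv_lhs => rw [← hdec]
        rw [List.count_append]
      cases hlast : w.getLast hne
      · right
        refine ⟨w.dropLast, mem_ballotF.2 ⟨by omega, ?_, ?_, hpd⟩,
          by rw [hlast] at hdec; exact hdec⟩
        · have := hcnt true; rw [hlast] at this; simp at this; omega
        · have := hcnt false; rw [hlast] at this; simp at this; omega
      · left
        refine ⟨w.dropLast, mem_ballotF.2 ⟨by omega, ?_, ?_, hpd⟩,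
          by rw [hlast] at hdec; exact hdec⟩
        · have := hcnt true; rw [hlast] at this; simp at this; omega
        · have := hcnt false; rw [hlast] at this; simp at this; omega
    · rintro (⟨t, ht, rfl⟩ | ⟨t, ht, rfl⟩)
      · obtain ⟨htl, htt, htf, htp⟩ := mem_ballotF.1 ht
        have hab : b + 1 ≤ a := by
          by_contra hc
          have : a < b + 1 := by omega
          rw [ballot_empty a (b+1) this] at ht
          simp at ht
        refine mem_ballotF.2 ⟨by simp [htl]; omega, by simp [htt], by simp [htf], ?_⟩
        refine Pref_append 0 (a - (b+1)) htp ?_ (by omega)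
        intro i
        match i with
        | 0 => simp
        | i+1 => simp [List.take_succ_cons]
      · obtain ⟨htl, htt, htf, htp⟩ := mem_ballotF.1 ht
        refine mem_ballotF.2 ⟨by simp [htl]; omega, by simp [htt], by simp [htf], ?_⟩
        refine Pref_append 0 (a + 1 - b) htp ?_ (by omega)
        intro i
        match i with
        | 0 => simp
        | i+1 =>
          have h1 : (List.take (i+1) [false]).count false ≤ 1 := by
            match i with
            | 0 => simp
            | i+1 => simp
          have h2 : (0:ℕ) < a + 1 - b := by omega
          omega
  rw [hsplit, Finset.card_union_of_disjoint, Finset.card_image_of_injective _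
    (fun x y h => by simpa using List.append_inj_left' h rfl),
    Finset.card_image_of_injective _ (fun x y h => by simpa using List.append_inj_left' h rfl)]
  rw [Finset.disjoint_left]
  rintro x hx hy
  obtain ⟨t1, _, rfl⟩ := Finset.mem_image.1 hx
  obtain ⟨t2, _, heq⟩ := Finset.mem_image.1 hy
  have h1 : (t1 ++ [true]).getLast? = some true := by simp
  have h2 : (t2 ++ [false]).getLast? = some false := by simp
  rw [← heq, h2] at h1
  simp at h1

lemma ballot_card : ∀ N a b, a + b ≤ N → 1 ≤ b → b ≤ a →
    (ballotF a b).card + (a+b).choose (b-1) = (a+b).choose b := by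
  intro N
  induction N with
  | zero => intro a b h h1 h2; omega
  | succ N ihN =>
    intro a b hab h1 h2
    obtain ⟨b', rfl⟩ : ∃ b', b = b' + 1 := ⟨b - 1, by omega⟩
    obtain ⟨a', rfl⟩ : ∃ a', a = a' + 1 := ⟨a - 1, by omega⟩
    rw [ballot_rec a' b' (by omega)]
    match b' with
    | 0 =>
      -- goal : card (ballotF a' 1) + card (ballotF (a'+1) 0) + (a'+2).choose 0 = (a'+2).choose 1
      rw [ballot_zero (a'+1), Finset.card_singleton]
      have hc1 : (ballotF a' 1).card = a' := by
        match a' with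
        | 0 =>
          rw [ballot_empty 0 1 (by omega)]
          simp
        | a''+1 =>
          have := ihN (a''+1) 1 (by omega) (by omega) (by omega)
          simp [Nat.choose_one_right] at this
          omega
      rw [hc1]
      have : a' + 1 + (0 + 1) = a' + 2 := by ring
      rw [this]
      simp [Nat.choose_one_right]
    | b''+1 =>
      have hterm2 : (ballotF (a'+1) (b''+1)).card + (a'+b''+2).choose b''
          = (a'+b''+2).choose (b''+1) := by
        have := ihN (a'+1) (b''+1) (by omega) (by omega) (by omega)
        rw [show a'+1+(b''+1) = a'+b''+2 by ring, Nat.add_sub_cancel] at this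
        exact this
      have hterm1 : (ballotF a' (b''+2)).card + (a'+b''+2).choose (b''+1)
          = (a'+b''+2).choose (b''+2) := by
        rcases Nat.lt_or_ge (b''+2) (a'+1) with hba | hba
        · have := ihN a' (b''+2) (by omega) (by omega) (by omega)
          rw [show a'+(b''+2) = a'+b''+2 by ring, show b''+2-1 = b''+1 by omega] at this
          exact this
        · have ha' : a' = b'' + 1 := by omega
          subst ha'
          rw [ballot_empty (b''+1) (b''+2) (by omega), Finset.card_empty, Nat.zero_add]
          have hsym := Nat.choose_symm (n := 2*b''+3) (k := b''+2) (by omega)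
          rw [show 2*b''+3-(b''+2) = b''+1 by omega] at hsym
          rw [show b''+1+b''+2 = 2*b''+3 by ring]
          exact hsym
      rw [show a'+1+(b''+1+1) = (a'+b''+2)+1 by ring, Nat.add_sub_cancel,
        show b''+1+1 = b''+2 by omega]
      have hp1 : ((a'+b''+2)+1).choose (b''+2)
          = (a'+b''+2).choose (b''+1) + (a'+b''+2).choose (b''+2) := by
        rw [show b''+2 = (b''+1)+1 by omega, Nat.choose_succ_succ]
      have hp2 : ((a'+b''+2)+1).choose (b''+1)
          = (a'+b''+2).choose b'' + (a'+b''+2).choose (b''+1) := by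
        rw [Nat.choose_succ_succ]
      omega


/-! ### assembly -/

lemma trailing_pos {n : ℕ} {Q : List Bool} (hQ : Q ∈ dyckQ n) : 1 ≤ trailingDRun Q := by
  by_contra h
  have hr : trailingDRun Q = 0 := by omega
  obtain ⟨hQw, hlen, hct, hcf, hpref⟩ := Finset.mem_filter.1 hQ
  have hlt : trailingDRun Q < Q.length := by rw [hr, hlen]; omega
  have hget := getD_before_trailing Q hlt
  rw [hr, Nat.sub_zero] at hget
  have hdec := take_decomp Q (show Q.length - 1 < Q.length by rw [hlen]; omega) hget
  have hdrop : Q.drop (Q.length - 1 + 1) = [] := by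
    apply List.drop_eq_nil_of_le
    omega
  rw [hdrop] at hdec
  have h1 : Q.count false = (Q.take (Q.length - 1)).count false := by
    conv_lhs => rw [hdec]
    rw [List.count_append]
    simp
  have h2 : Q.count true = (Q.take (Q.length - 1)).count true + 1 := by
    conv_lhs => rw [hdec]
    rw [List.count_append]
    simp
  have h3 := hpref (Q.length - 1)
  omega

lemma trailing_le {n : ℕ} {Q : List Bool} (hQ : Q ∈ dyckQ n) : trailingDRun Q ≤ n + 1 := by
  obtain ⟨hQw, hlen, hct, hcf, hpref⟩ := Finset.mem_filter.1 hQ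
  have := trailing_le_count Q
  omega

lemma ballot_card_cat (n s : ℕ) (hs : s ≤ n) : (ballotF n s).card = catalanTriangle n s := by
  match s with
  | 0 =>
    rw [ballot_zero, Finset.card_singleton, catalanTriangle]
    have h1 : (n - 0 + 1) * (n + 0).choose n / (n + 1) = (n+1) / (n+1) := by simp
    rw [h1, Nat.div_self (by omega)]
  | s+1 =>
    have hbc := ballot_card (n + (s+1)) n (s+1) (le_refl _) (by omega) hs
    rw [Nat.add_sub_cancel] at hbc
    -- (n+1) * choose (n+s+1) s = (s+1) * choose (n+s+1) (s+1)
    have hkey : (n+s+1).choose (s+1) * (s+1) = (n+s+1).choose s * (n+1) := by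
      have := Nat.choose_succ_right_eq (n+s+1) s
      rw [show n+s+1-s = n+1 by omega] at this
      exact this
    have hsymm : (n+(s+1)).choose n = (n+(s+1)).choose (s+1) := by
      have := Nat.choose_symm (n := n+(s+1)) (k := s+1) (by omega)
      rw [show n+(s+1)-(s+1) = n by omega] at this
      rw [← this]
    set C := (n+(s+1)).choose (s+1) with hC
    set C' := (n+(s+1)).choose s with hC'
    set B := (ballotF n (s+1)).card with hB
    -- hbc : B + C' = C ; hkey : C * (s+1) = C' * (n+1)
    have e1 : (n+1) * B + (n+1) * C' = (n+1) * C := by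
      rw [← Nat.mul_add, hbc]
    have e2 : (n+1) * C' = (s+1) * C := by
      have : C * (s+1) = C' * (n+1) := by
        rw [hC, hC', show n+(s+1) = n+s+1 by ring]
        exact hkey
      calc (n+1) * C' = C' * (n+1) := by ring
        _ = C * (s+1) := this.symm
        _ = (s+1) * C := by ring
    have e3 : (n+1) * C = (n+1-(s+1)) * C + (s+1) * C := by
      rw [← Nat.add_mul]
      congr 1
      omega
    have e4 : (n+1) * B = (n-(s+1)+1) * C := by
      rw [show n-(s+1)+1 = n+1-(s+1) by omega]
      omega
    rw [catalanTriangle, hsymm, ← e4, Nat.mul_div_cancel_left _ (by omega : 0 < n+1)]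

lemma card_class_cat (n j : ℕ) (hj : j ≤ n) :
    ((dyckQ n).filter (fun Q => n + 1 - trailingDRun Q = j)).card = catalanTriangle n j := by
  rw [← ballot_card_cat n j hj, ← card_trailing_class n j hj]
  congr 1
  apply Finset.filter_congr
  intro Q hQ
  have h1 := trailing_pos hQ
  have h2 := trailing_le hQ
  constructor
  · intro h; omega
  · intro h; omega

lemma card_setB_eq_borel (n k : ℕ) (hk : k ≤ n) : (setB n k).card = borelTriangle n k := by
  rw [card_setB_sum]
  rw [Finset.sum_congr rfl (fun Q hQ => by rw [card_eligSet n hQ])]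
  rw [← Finset.sum_fiberwise_of_maps_to (g := fun Q => n + 1 - trailingDRun Q)
    (t := Finset.range (n+1))
    (fun Q hQ => by
      rw [Finset.mem_range]
      have := trailing_pos hQ
      omega)
    (fun Q => (n + 1 - trailingDRun Q).choose k)]
  have hinner : ∀ j ∈ Finset.range (n+1),
      (∑ Q ∈ (dyckQ n).filter (fun Q => n + 1 - trailingDRun Q = j),
        (n + 1 - trailingDRun Q).choose k) = j.choose k * catalanTriangle n j := by
    intro j hj
    rw [Finset.sum_congr rfl (fun Q hQ => by rw [(Finset.mem_filter.1 hQ).2])]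
    rw [Finset.sum_const, smul_eq_mul, card_class_cat n j (by
      have := Finset.mem_range.1 hj; omega)]
    ring
  rw [Finset.sum_congr rfl hinner, borelTriangle]
  rw [← Finset.sum_subset (show Finset.Icc k n ⊆ Finset.range (n+1) by
    intro x hx
    rw [Finset.mem_range]
    have := (Finset.mem_Icc.1 hx).2
    omega)]
  intro x hx hnx
  have hxk : x < k := by
    rw [Finset.mem_range] at hx
    rw [Finset.mem_Icc] at hnx
    omega
  rw [Nat.choose_eq_zero_of_lt hxk, Nat.zero_mul]

lemma final_inside (n k : ℕ) (hk : k ≤ n) :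
    Nat.card {p : List Bool × Finset ℕ // condA n k p} = borelTriangle n k := by
  have h0 : Nat.card {p : List Bool × Finset ℕ // condA n k p} = (setA n k).card := by
    rw [setA]
    refine natCard_eq_filter _ _ ?_
    rintro ⟨P, S⟩ hp
    obtain ⟨⟨hlen, _, _, _⟩, hcard, hcond⟩ := hp
    refine Finset.mem_product.2 ⟨mem_allWords.2 hlen, Finset.mem_powerset.2 (fun i hi => ?_)⟩
    have := (hcond i hi).1.1
    rw [Finset.mem_range]
    omega
  rw [h0, ← card_setB_eq_setA, card_setB_eq_borel n k hk]

end

end BorelAux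

/-- The number of pairs `(P, S)` with `P` a Dyck word of semi-length `n+k+1` and `S` a set of
`k` `UDD`-patterns of `P`, none containing a down-step of the final maximal run of `D`'s of
`P`, equals `B_{n,k}`. -/
theorem card_markedUDDDyckWords (n k : ℕ) (hk : k ≤ n) :
    Nat.card {p : List Bool × Finset ℕ // IsDyckWord (n + k + 1) p.1 ∧
        p.2.card = k ∧ ∀ i ∈ p.2, IsUDDPattern p.1 i ∧
          i + 1 < p.1.length - trailingDRun p.1 ∧ i + 2 < p.1.length - trailingDRun p.1}
      = borelTriangle n k :=
  BorelAux.final_inside n k hk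
end

section
/- For all integers n ≥ 1 and 0 ≤ k ≤ (n−1)/2, the number of binary trees with exactly n vertices and exactly k+1 leaves equals 2^{n−2k−1} · binom(n−1, 2k) · catalan(k), where catalan(k) = (1/(k+1)) · binom(2k, k). -/
/-- Binary trees: every vertex has an ordered pair of (possibly absent) children. -/
inductive BinTree : Type
  | nil : BinTree
  | node : BinTree → BinTree → BinTree
  deriving DecidableEq

/-- The number of vertices of a binary tree. -/
def BinTree.size : BinTree → ℕ
  | .nil => 0
  | .node l r => l.size + r.size + 1

/-- The number of leaves (vertices with no children) of a binary tree. -/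
def BinTree.numLeaves : BinTree → ℕ
  | .nil => 0
  | .node .nil .nil => 1
  | .node l r => l.numLeaves + r.numLeaves

namespace BinTree

lemma size_eq_zero {T : BinTree} : T.size = 0 ↔ T = .nil := by
  cases T <;> simp [size]

lemma numLeaves_node {l r : BinTree} (h : ¬(l = .nil ∧ r = .nil)) :
    (node l r).numLeaves = l.numLeaves + r.numLeaves := by
  cases l <;> cases r <;> simp_all [numLeaves]

lemma numLeaves_pos {T : BinTree} (h : T ≠ .nil) : 0 < T.numLeaves := by
  induction T with
  | nil => simp at h
  | node l r ihl ihr =>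
    cases l with
    | nil => cases r with
      | nil => simp [numLeaves]
      | node a b => simp only [numLeaves]; have := ihr (by simp); omega
    | node a b =>
      have h1 := ihl (by simp)
      cases r <;> simp only [numLeaves] <;> omega

def toTree : BinTree → Tree Unit
  | .nil => .nil
  | .node l r => .node () l.toTree r.toTree

lemma numNodes_toTree (T : BinTree) : T.toTree.numNodes = T.size := by
  induction T with
  | nil => rfl
  | node l r ihl ihr => simp [toTree, Tree.numNodes, size, ihl, ihr]

lemma toTree_injective : Function.Injective toTree := by
  intro a
  induction a with
  | nil => intro b h; cases b <;> simp [toTree] at h ⊢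
  | node l r ihl ihr =>
    intro b h
    cases b with
    | nil => simp [toTree] at h
    | node l' r' =>
      simp only [toTree, BinaryTree.node.injEq, true_and] at h
      rw [ihl h.1, ihr h.2]

instance finiteSub (n k : ℕ) : Finite {T : BinTree // T.size = n ∧ T.numLeaves = k} := by
  apply Finite.of_injective
    (fun T => (⟨T.1.toTree, by
      rw [BinaryTree.mem_treesOfNumNodesEq]; exact (numNodes_toTree _).trans T.2.1⟩ :
      {t // t ∈ Tree.treesOfNumNodesEq n}))
  intro a b h
  exact Subtype.ext (toTree_injective (congrArg Subtype.val h))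

end BinTree

open BinTree Finset

/-- number of binary trees with n vertices and k leaves -/
noncomputable def bcount (n k : ℕ) : ℕ := Nat.card {T : BinTree // T.size = n ∧ T.numLeaves = k}

lemma size_eq_one {T : BinTree} : T.size = 1 ↔ T = .node .nil .nil := by
  cases T with
  | nil => simp [BinTree.size]
  | node l r =>
    simp only [BinTree.size, BinTree.node.injEq]
    constructor
    · intro h
      have hl : l.size = 0 := by omega
      have hr : r.size = 0 := by omega
      exact ⟨size_eq_zero.mp hl, size_eq_zero.mp hr⟩
    · rintro ⟨rfl, rfl⟩; rfl

lemma bcount_zero_zero : bcount 0 0 = 1 := by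
  have : Unique {T : BinTree // T.size = 0 ∧ T.numLeaves = 0} := by
    refine ⟨⟨⟨.nil, by simp [BinTree.size, BinTree.numLeaves]⟩⟩, ?_⟩
    rintro ⟨T, h1, h2⟩
    have := size_eq_zero.mp h1
    subst this; rfl
  exact Nat.card_unique

lemma bcount_zero_succ (k : ℕ) : bcount 0 (k + 1) = 0 := by
  have : IsEmpty {T : BinTree // T.size = 0 ∧ T.numLeaves = k + 1} := by
    refine ⟨?_⟩
    rintro ⟨T, h1, h2⟩
    rw [size_eq_zero.mp h1] at h2
    simp [BinTree.numLeaves] at h2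
  exact Nat.card_of_isEmpty

lemma bcount_succ_zero (n : ℕ) : bcount (n + 1) 0 = 0 := by
  have : IsEmpty {T : BinTree // T.size = n + 1 ∧ T.numLeaves = 0} := by
    refine ⟨?_⟩
    rintro ⟨T, h1, h2⟩
    have hT : T ≠ .nil := by
      intro h; subst h; simp [BinTree.size] at h1
    have := numLeaves_pos hT
    omega
  exact Nat.card_of_isEmpty

lemma numLeaves_node_one : (BinTree.node .nil .nil).numLeaves = 1 := rfl

lemma bcount_one (k : ℕ) : bcount 1 k = if k = 1 then 1 else 0 := by
  split
  · next h =>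
    subst h
    have : Unique {T : BinTree // T.size = 1 ∧ T.numLeaves = 1} := by
      refine ⟨⟨⟨.node .nil .nil, by simp [BinTree.size, BinTree.numLeaves]⟩⟩, ?_⟩
      rintro ⟨T, h1, h2⟩
      have := size_eq_one.mp h1
      subst this; rfl
    exact Nat.card_unique
  · next h =>
    have : IsEmpty {T : BinTree // T.size = 1 ∧ T.numLeaves = k} := by
      refine ⟨?_⟩
      rintro ⟨T, h1, h2⟩
      rw [size_eq_one.mp h1] at h2
      rw [numLeaves_node_one] at h2
      omega
    exact Nat.card_of_isEmpty

lemma natCard_sigma {ι : Type} [Fintype ι] (f : ι → Type) [∀ i, Finite (f i)] :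
    Nat.card (Σ i, f i) = ∑ i, Nat.card (f i) := by
  letI := fun i => Fintype.ofFinite (f i)
  simp [Nat.card_eq_fintype_card, Fintype.card_sigma]

lemma bcount_rec (m k : ℕ) :
    bcount (m + 2) k = ∑ i ∈ range (m + 2), ∑ j ∈ range (k + 1),
      bcount i j * bcount (m + 1 - i) (k - j) := by
  classical
  let F : Fin (m + 2) → Fin (k + 1) → Type :=
    fun i j => {l : BinTree // l.size = i.1 ∧ l.numLeaves = j.1} ×
               {r : BinTree // r.size = m + 1 - i.1 ∧ r.numLeaves = k - j.1}
  let f : (Σ i : Fin (m + 2), Σ j : Fin (k + 1), F i j) →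
      {T : BinTree // T.size = m + 2 ∧ T.numLeaves = k} := fun x =>
    ⟨.node x.2.2.1.1 x.2.2.2.1, by
      obtain ⟨i, j, ⟨l, hl1, hl2⟩, ⟨r, hr1, hr2⟩⟩ := x
      dsimp only
      have hi : i.1 ≤ m + 1 := Nat.lt_succ_iff.mp i.2
      have hj : j.1 ≤ k := Nat.lt_succ_iff.mp j.2
      refine ⟨by simp only [BinTree.size]; omega, ?_⟩
      rw [numLeaves_node ?_]
      · omega
      · rintro ⟨rfl, rfl⟩
        simp only [BinTree.size] at hl1 hr1
        omega⟩
  have hb : Function.Bijective f := by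
    constructor
    · rintro ⟨i, j, ⟨l, hl⟩, ⟨r, hr⟩⟩ ⟨i', j', ⟨l', hl'⟩, ⟨r', hr'⟩⟩ h
      simp only [f, Subtype.mk.injEq, BinTree.node.injEq] at h
      obtain ⟨h1, h2⟩ := h
      subst h1; subst h2
      have hii : i = i' := Fin.ext (by rw [← hl.1, hl'.1])
      subst hii
      have hjj : j = j' := Fin.ext (by rw [← hl.2, hl'.2])
      subst hjj
      rfl
    · rintro ⟨T, hT1, hT2⟩
      cases T with
      | nil => simp [BinTree.size] at hT1
      | node l r =>
        have hs : l.size + r.size = m + 1 := by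
          simp only [BinTree.size] at hT1; omega
        have hnn : ¬(l = .nil ∧ r = .nil) := by
          rintro ⟨rfl, rfl⟩
          simp [BinTree.size] at hs
        have hlv : l.numLeaves + r.numLeaves = k := by
          rw [← hT2, numLeaves_node hnn]
        exact ⟨⟨⟨l.size, by omega⟩, ⟨l.numLeaves, by omega⟩,
          ⟨l, rfl, rfl⟩, ⟨r, by simp; omega, by simp; omega⟩⟩, rfl⟩
  have key : bcount (m + 2) k =
      Nat.card (Σ i : Fin (m + 2), Σ j : Fin (k + 1), F i j) :=
    (Nat.card_congr (Equiv.ofBijective f hb)).symm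
  rw [key, natCard_sigma]
  rw [Finset.sum_range fun i => _]
  refine Finset.sum_congr rfl fun i _ => ?_
  rw [natCard_sigma]
  rw [Finset.sum_range fun j => _]
  refine Finset.sum_congr rfl fun j _ => ?_
  rw [Nat.card_prod]
  rfl

lemma sum_choose_mul_choose (m : ℕ) : ∀ a b : ℕ,
    ∑ i ∈ range (m + 1), i.choose a * (m - i).choose b = (m + 1).choose (a + b + 1) := by
  induction m with
  | zero =>
    intro a b
    rw [Finset.sum_range_one]
    cases a with
    | zero =>
      cases b with
      | zero => rfl
      | succ b => simp [Nat.choose_eq_zero_of_lt (by omega : 0 < b + 1),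
          Nat.choose_eq_zero_of_lt (by omega : (1:ℕ) < 0 + (b + 1) + 1),
          Nat.choose_eq_zero_of_lt (by omega : (1:ℕ) < b + 1 + 1)]
    | succ a => simp [Nat.choose_eq_zero_of_lt (by omega : 0 < a + 1),
        Nat.choose_eq_zero_of_lt (by omega : 1 < a + 1 + b + 1)]
  | succ m ih =>
    intro a b
    rw [Finset.sum_range_succ']
    simp only [Nat.succ_sub_succ]
    cases a with
    | zero =>
      simp only [Nat.choose_zero_right, one_mul, Nat.zero_add, Nat.sub_zero]
      have := ih 0 b
      simp only [Nat.choose_zero_right, one_mul, Nat.zero_add] at this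
      rw [this, Nat.choose_succ_succ' (m + 1) b]
      omega
    | succ a =>
      simp only [Nat.choose_succ_succ' _ a, add_mul, Finset.sum_add_distrib, ih a b, ih (a + 1) b,
        Nat.choose_eq_zero_of_lt (by omega : 0 < a + 1), zero_mul, add_zero]
      have h2 : (m + 1 + 1).choose (a + b + 1 + 1) =
          (m + 1).choose (a + b + 1) + (m + 1).choose (a + b + 1 + 1) :=
        Nat.choose_succ_succ' (m + 1) (a + b + 1)
      have h3 : a + 1 + b + 1 = a + b + 1 + 1 := by omega
      rw [h3, h2]

lemma pointwise {m k i j : ℕ} (hi : i < m) (hj : j < k) :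
    2 ^ (i - 2 * j) * i.choose (2 * j) * catalan j *
      (2 ^ (m - 1 - i - 2 * (k - 1 - j)) * (m - 1 - i).choose (2 * (k - 1 - j)) *
        catalan (k - 1 - j))
    = 2 ^ (m + 1 - 2 * k) *
        (i.choose (2 * j) * ((m - 1 - i).choose (2 * (k - 1 - j)) *
          (catalan j * catalan (k - 1 - j)))) := by
  by_cases h1 : 2 * j ≤ i
  · by_cases h2 : 2 * (k - 1 - j) ≤ m - 1 - i
    · have hp : (2:ℕ) ^ (i - 2 * j) * 2 ^ (m - 1 - i - 2 * (k - 1 - j)) =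
          2 ^ (m + 1 - 2 * k) := by
        rw [← pow_add]
        congr 1
        omega
      calc 2 ^ (i - 2 * j) * i.choose (2 * j) * catalan j *
            (2 ^ (m - 1 - i - 2 * (k - 1 - j)) * (m - 1 - i).choose (2 * (k - 1 - j)) *
              catalan (k - 1 - j))
          = 2 ^ (i - 2 * j) * 2 ^ (m - 1 - i - 2 * (k - 1 - j)) *
            (i.choose (2 * j) * ((m - 1 - i).choose (2 * (k - 1 - j)) *
              (catalan j * catalan (k - 1 - j)))) := by ring
        _ = _ := by rw [hp]
    · rw [Nat.choose_eq_zero_of_lt (show m - 1 - i < 2 * (k - 1 - j) by omega)]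
      ring
  · rw [Nat.choose_eq_zero_of_lt (show i < 2 * j by omega)]
    ring

lemma bcount_formula : ∀ n : ℕ, ∀ k : ℕ,
    bcount (n + 1) (k + 1) = 2 ^ (n - 2 * k) * n.choose (2 * k) * catalan k := by
  intro n
  induction n using Nat.strong_induction_on with
  | _ n ih =>
    match n with
    | 0 =>
      intro k
      match k with
      | 0 => simp [bcount_one]
      | k + 1 =>
        rw [bcount_one]
        rw [Nat.choose_eq_zero_of_lt (by omega : (0:ℕ) < 2 * (k + 1))]
        simp
    | m + 1 =>
      intro k
      rw [bcount_rec m (k + 1)]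
      -- split the inner sum at j = 0
      have step1 : ∀ i, ∑ j ∈ range (k + 2), bcount i j * bcount (m + 1 - i) (k + 1 - j)
          = (∑ j ∈ range (k + 1), bcount i (j + 1) * bcount (m + 1 - i) (k - j))
            + bcount i 0 * bcount (m + 1 - i) (k + 1) := by
        intro i
        rw [Finset.sum_range_succ']
        simp only [Nat.add_sub_add_right, Nat.sub_zero]
      simp only [step1, Finset.sum_add_distrib]
      -- the j = 0 column
      have col0 : ∑ i ∈ range (m + 2), bcount i 0 * bcount (m + 1 - i) (k + 1)
          = bcount (m + 1) (k + 1) := by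
        rw [Finset.sum_range_succ']
        simp [bcount_succ_zero, bcount_zero_zero]
      rw [col0]
      -- the main double sum: split off i = 0 (zero) and i = m + 1 (gives another copy)
      have row0 : ∑ i ∈ range (m + 2),
            ∑ j ∈ range (k + 1), bcount i (j + 1) * bcount (m + 1 - i) (k - j)
          = (∑ i ∈ range (m + 1),
              ∑ j ∈ range (k + 1), bcount (i + 1) (j + 1) * bcount (m - i) (k - j)) := by
        rw [Finset.sum_range_succ']
        simp [bcount_zero_succ, Nat.add_sub_add_right]
      rw [row0]
      have rowtop : ∑ i ∈ range (m + 1),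
            ∑ j ∈ range (k + 1), bcount (i + 1) (j + 1) * bcount (m - i) (k - j)
          = (∑ i ∈ range m,
              ∑ j ∈ range (k + 1), bcount (i + 1) (j + 1) * bcount (m - i) (k - j))
            + bcount (m + 1) (k + 1) := by
        rw [Finset.sum_range_succ]
        congr 1
        rw [Finset.sum_range_succ]
        have z : ∑ j ∈ range k, bcount (m + 1) (j + 1) * bcount (m - m) (k - j) = 0 := by
          refine Finset.sum_eq_zero fun j hj => ?_
          have hjk : j < k := Finset.mem_range.mp hj
          have : m - m = 0 := by omega
          rw [this]
          have : k - j = (k - j - 1) + 1 := by omega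
          rw [this, bcount_zero_succ, mul_zero]
        rw [z]
        simp [bcount_zero_zero]
      rw [rowtop]
      -- now kill the j = k term in the inner sums (i < m)
      have coltop : ∀ i ∈ range m,
          ∑ j ∈ range (k + 1), bcount (i + 1) (j + 1) * bcount (m - i) (k - j)
          = ∑ j ∈ range k, bcount (i + 1) (j + 1) * bcount (m - i) (k - j) := by
        intro i hi
        have him : i < m := Finset.mem_range.mp hi
        rw [Finset.sum_range_succ]
        have : m - i = (m - i - 1) + 1 := by omega
        rw [Nat.sub_self, this, bcount_succ_zero, mul_zero, add_zero]
      rw [Finset.sum_congr rfl coltop]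
      -- apply the inductive hypothesis to every factor
      have ihterm : ∀ i ∈ range m, ∀ j ∈ range k,
          bcount (i + 1) (j + 1) * bcount (m - i) (k - j)
          = 2 ^ (m + 1 - 2 * k) *
              (i.choose (2 * j) * ((m - 1 - i).choose (2 * (k - 1 - j)) *
                (catalan j * catalan (k - 1 - j)))) := by
        intro i hi j hj
        have him : i < m := Finset.mem_range.mp hi
        have hjk : j < k := Finset.mem_range.mp hj
        have e1 : m - i = (m - 1 - i) + 1 := by omega
        have e2 : k - j = (k - 1 - j) + 1 := by omega
        rw [ih i (by omega) j, e1, e2, ih (m - 1 - i) (by omega) (k - 1 - j)]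
        exact pointwise him hjk
      rw [Finset.sum_congr rfl fun i hi => Finset.sum_congr rfl fun j hj => ihterm i hi j hj]
      rw [ih m (by omega) k]
      -- now pure arithmetic with binomial identities
      match m, k with
      | 0, k =>
        match k with
        | 0 => simp
        | k + 1 =>
          rw [Nat.choose_eq_zero_of_lt (show (0:ℕ) < 2 * (k+1) by omega),
            Nat.choose_eq_zero_of_lt (show (1:ℕ) < 2 * (k+1) by omega)]
          simp
      | m + 1, 0 => simp [pow_succ]; ring
      | m + 1, k + 1 =>
        -- compute the double sum
        have dsum : ∑ i ∈ range (m + 1), ∑ j ∈ range (k + 1),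
              2 ^ (m + 1 + 1 - 2 * (k + 1)) *
                (i.choose (2 * j) * ((m + 1 - 1 - i).choose (2 * (k + 1 - 1 - j)) *
                  (catalan j * catalan (k + 1 - 1 - j))))
            = 2 ^ (m + 1 + 1 - 2 * (k + 1)) * ((m + 1).choose (2 * k + 1) * catalan (k + 1)) := by
          simp only [Nat.add_sub_cancel]
          simp only [← Finset.mul_sum]
          congr 1
          rw [Finset.sum_comm]
          have inner : ∀ j ∈ range (k + 1),
              ∑ i ∈ range (m + 1),
                i.choose (2 * j) * ((m - i).choose (2 * (k - j)) * (catalan j * catalan (k - j)))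
              = (m + 1).choose (2 * k + 1) * (catalan j * catalan (k - j)) := by
            intro j hj
            have hjk : j < k + 1 := Finset.mem_range.mp hj
            have : ∑ i ∈ range (m + 1),
                i.choose (2 * j) * ((m - i).choose (2 * (k - j)) * (catalan j * catalan (k - j)))
                = (∑ i ∈ range (m + 1), i.choose (2 * j) * (m - i).choose (2 * (k - j)))
                  * (catalan j * catalan (k - j)) := by
              rw [Finset.sum_mul]
              exact Finset.sum_congr rfl fun i _ => by ring
            rw [this, sum_choose_mul_choose m (2 * j) (2 * (k - j))]
            congr 2
            omega
          rw [Finset.sum_congr rfl inner, ← Finset.mul_sum, Finset.sum_range, ← catalan_succ]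
        rw [dsum]
        rw [show 2 * (k + 1) = (2 * k + 1) + 1 by omega,
          Nat.choose_succ_succ' (m + 1) (2 * k + 1)]
        by_cases h : (2 * k + 1) + 1 ≤ m + 1
        · rw [show m + 1 + 1 - ((2 * k + 1) + 1) = (m + 1 - ((2 * k + 1) + 1)) + 1 by omega,
            pow_succ]
          ring
        · rw [Nat.choose_eq_zero_of_lt (show m + 1 < (2 * k + 1) + 1 by omega)]
          ring

/-- For `n ≥ 1` and `0 ≤ k ≤ (n-1)/2`, the number of binary trees with exactly `n` vertices
and exactly `k+1` leaves is `2^(n-2k-1) * binom(n-1, 2k) * catalan(k)`. -/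
theorem card_binTrees_leaves (n k : ℕ) (hn : 1 ≤ n) (hk : 2 * k ≤ n - 1) :
    Nat.card {T : BinTree // T.size = n ∧ T.numLeaves = k + 1}
      = 2 ^ (n - 2 * k - 1) * (n - 1).choose (2 * k) * catalan k := by
  obtain ⟨m, rfl⟩ : ∃ m, n = m + 1 := ⟨n - 1, by omega⟩
  have e1 : m + 1 - 2 * k - 1 = m - 2 * k := by omega
  have e2 : m + 1 - 1 = m := by omega
  rw [e1, e2]
  exact bcount_formula m k
end

section
/- Let F be the formal power series in two commuting variables x and t over ℚ whose coefficient of t^k x^n is f_{n,k}, where f_{0,0} = 1, f_{n,k} = B_{n−1,k} for n ≥ 1 and 0 ≤ k ≤ n−1, and f_{n,k} = 0 otherwise. Then F satisfies the quadratic equation (x + t)·F² − (2t + 1)·F + (t + 1) = 0 in ℚ[[x, t]]. -/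
/-- `f_{0,0} = 1`, `f_{n,k} = B_{n-1,k}` for `n ≥ 1` and `0 ≤ k ≤ n-1`, and `f_{n,k} = 0`
otherwise. -/
def fCoeff (n k : ℕ) : ℕ :=
  if n = 0 then (if k = 0 then 1 else 0)
  else if k ≤ n - 1 then borelTriangle (n - 1) k else 0

/-- The power series `F ∈ ℚ[[x,t]]` (viewed as `ℚ[[t]][[x]]`) whose coefficient of
`t^k x^n` is `f_{n,k}`. -/
noncomputable def F : PowerSeries (PowerSeries ℚ) :=
  PowerSeries.mk fun n => PowerSeries.mk fun k => (fCoeff n k : ℚ)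


namespace FQuad
open PowerSeries Finset

/-- The signed ballot number `binom(n+k,n) - binom(n+k,n+1)` as a rational. -/
def Dq (n k : ℕ) : ℚ := ((n + k).choose n : ℚ) - ((n + k).choose (n + 1) : ℚ)

lemma Dq_zero (n : ℕ) : Dq n 0 = 1 := by
  simp [Dq, Nat.choose_succ_self]

lemma Dq_succ_self (n : ℕ) : Dq n (n + 1) = 0 := by
  have h : (n + (n + 1)).choose n = (n + (n + 1)).choose (n + 1) := by
    rw [← Nat.choose_symm (by omega)]
    congr 1
    omega
  simp [Dq, h]

lemma Dq_pascal (n k : ℕ) : Dq (n + 1) (k + 1) = Dq (n + 1) k + Dq n (k + 1) := by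
  have h1 : (n + 1 + (k + 1)) = (n + 1 + k) + 1 := by ring
  have h2 : (n + (k + 1)) = n + 1 + k := by ring
  unfold Dq
  rw [h1, h2, Nat.choose_succ_succ (n + 1 + k) n, Nat.choose_succ_succ (n + 1 + k) (n + 1)]
  push_cast
  ring

/-- key multiplicative identity -/
lemma choose_succ_mul (n k : ℕ) :
    (n + k).choose (n + 1) * (n + 1) = (n + k).choose n * k := by
  have := Nat.choose_succ_right_eq (n + k) n
  simpa using this

lemma choose_le (n k : ℕ) (h : k ≤ n + 1) : (n + k).choose (n + 1) ≤ (n + k).choose n := by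
  have h1 := choose_succ_mul n k
  by_contra hlt
  push_neg at hlt
  nlinarith [Nat.choose_pos (show n ≤ n + k by omega)]

lemma catalanTriangle_eq (n k : ℕ) (h : k ≤ n) :
    catalanTriangle n k = (n + k).choose n - (n + k).choose (n + 1) := by
  have key : (n - k + 1) * (n + k).choose n
      = ((n + k).choose n - (n + k).choose (n + 1)) * (n + 1) := by
    have h1 := choose_succ_mul n k
    have h2 := choose_le n k (by omega)
    have h3 : n - k + 1 = (n + 1) - k := by omega
    zify [h2, h, show k ≤ n + 1 by omega]
    push_cast at h1
    linarith
  rw [catalanTriangle, key]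
  exact Nat.mul_div_cancel _ (by omega)

lemma catalanTriangle_cast (n k : ℕ) (h : k ≤ n) : (catalanTriangle n k : ℚ) = Dq n k := by
  rw [catalanTriangle_eq n k h, Dq, Nat.cast_sub (choose_le n k (by omega))]

lemma Dq_diag (n : ℕ) : Dq n n = (catalan n : ℚ) := by
  have h1 : ((n + n).choose (n + 1) : ℚ) * (n + 1) = ((n + n).choose n : ℚ) * n := by
    exact_mod_cast congrArg (Nat.cast (R := ℚ)) (choose_succ_mul n n)
  have h2 : ((n + 1) * catalan n : ℚ) = ((n + n).choose n : ℚ) := by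
    have := succ_mul_catalan_eq_centralBinom n
    have h3 : n.centralBinom = (n + n).choose n := by
      rw [Nat.centralBinom]; congr 1; ring
    exact_mod_cast h3 ▸ this
  have hn : ((n : ℚ) + 1) ≠ 0 := by positivity
  unfold Dq
  apply mul_left_cancel₀ hn
  linear_combination -h1 - h2


noncomputable section

/-- `u = 1 + t` as a power series in `t`. -/
def u : PowerSeries ℚ := 1 + PowerSeries.X

/-- Row polynomial of the Catalan triangle evaluated at `u`. -/
def p (m : ℕ) : PowerSeries ℚ := ∑ s ∈ range (m + 1), PowerSeries.C (R := ℚ) (Dq m s) * u ^ s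

lemma p_zero : p 0 = 1 := by simp [p, Dq_zero]

lemma one_sub_u : 1 - u = -PowerSeries.X := by simp [u]

lemma R1 (m : ℕ) :
    (1 - u) * p (m + 1) = p m - PowerSeries.C (R := ℚ) (Dq (m + 1) (m + 1)) * u ^ (m + 2) := by
  have e1 : p (m + 1) = PowerSeries.C (R := ℚ) (Dq (m + 1) 0)
      + ∑ s ∈ range (m + 1), PowerSeries.C (R := ℚ) (Dq (m + 1) (s + 1)) * u ^ (s + 1) := by
    rw [p, Finset.sum_range_succ']; simp [add_comm]
  have e2 : ∀ s ∈ range (m + 1),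
      PowerSeries.C (R := ℚ) (Dq (m + 1) (s + 1)) * u ^ (s + 1)
      = PowerSeries.C (R := ℚ) (Dq (m + 1) s) * u ^ (s + 1)
        + PowerSeries.C (R := ℚ) (Dq m (s + 1)) * u ^ (s + 1) := by
    intro s _
    rw [Dq_pascal, map_add]
    ring
  have e3 : u * (p (m + 1) - PowerSeries.C (R := ℚ) (Dq (m + 1) (m + 1)) * u ^ (m + 1))
      = ∑ s ∈ range (m + 1), PowerSeries.C (R := ℚ) (Dq (m + 1) s) * u ^ (s + 1) := by
    have h : p (m + 1) = (∑ s ∈ range (m + 1), PowerSeries.C (R := ℚ) (Dq (m + 1) s) * u ^ s)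
        + PowerSeries.C (R := ℚ) (Dq (m + 1) (m + 1)) * u ^ (m + 1) := by
      rw [p, Finset.sum_range_succ]
    rw [h, add_sub_cancel_right, Finset.mul_sum]
    exact Finset.sum_congr rfl fun s _ => by ring
  have e4 : ∑ s ∈ range (m + 1), PowerSeries.C (R := ℚ) (Dq m (s + 1)) * u ^ (s + 1)
      = p m - 1 := by
    have h : p m + PowerSeries.C (R := ℚ) (Dq m (m + 1)) * u ^ (m + 1)
        = 1 + ∑ s ∈ range (m + 1), PowerSeries.C (R := ℚ) (Dq m (s + 1)) * u ^ (s + 1) := by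
      rw [p, ← Finset.sum_range_succ, Finset.sum_range_succ']
      simp [Dq_zero, add_comm]
    rw [Dq_succ_self] at h
    simp at h
    linear_combination -h
  have expand : p (m + 1)
      = PowerSeries.C (R := ℚ) (Dq (m + 1) 0)
        + (u * (p (m + 1) - PowerSeries.C (R := ℚ) (Dq (m + 1) (m + 1)) * u ^ (m + 1)) + (p m - 1)) := by
    conv_lhs => rw [e1, Finset.sum_congr rfl e2, Finset.sum_add_distrib, e4, ← e3]
  rw [Dq_zero, map_one] at expand
  linear_combination expand

lemma Ldagger (m : ℕ) :
    p (m + 1) = p m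
      + ∑ j ∈ range (m + 1), PowerSeries.C (R := ℚ) (catalan j : ℚ) * u ^ (j + 1) * p (m - j) := by
  induction m with
  | zero =>
      have h1 : p 1 = PowerSeries.C (R := ℚ) (Dq 1 0) + PowerSeries.C (R := ℚ) (Dq 1 1) * u := by
        rw [p, Finset.sum_range_succ, Finset.sum_range_one]; ring
      rw [h1, Dq_zero, Dq_diag]
      simp [catalan_one, p_zero]
  | succ m ih =>
      have hX : (1 - u) ≠ 0 := by
        rw [one_sub_u]
        exact neg_ne_zero.mpr PowerSeries.X_ne_zero
      apply mul_left_cancel₀ hX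
      have hR2 := R1 (m + 1)
      have hR1 := R1 m
      rw [Dq_diag] at hR1 hR2
      have sum1 : (1 - u) * ∑ j ∈ range (m + 2),
            PowerSeries.C (R := ℚ) (catalan j : ℚ) * u ^ (j + 1) * p (m + 1 - j)
          = ∑ j ∈ range (m + 1),
              PowerSeries.C (R := ℚ) (catalan j : ℚ) * u ^ (j + 1) * p (m - j)
            - (∑ j ∈ range (m + 1), PowerSeries.C (R := ℚ) ((catalan j : ℚ) * (catalan (m + 1 - j) : ℚ))
                * u ^ (m + 3))
            + PowerSeries.C (R := ℚ) (catalan (m + 1) : ℚ) * (u ^ (m + 2) - u ^ (m + 3)) := by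
        rw [Finset.mul_sum, Finset.sum_range_succ]
        have last : (1 - u) * (PowerSeries.C (R := ℚ) (catalan (m + 1) : ℚ) * u ^ (m + 2)
              * p (m + 1 - (m + 1)))
            = PowerSeries.C (R := ℚ) (catalan (m + 1) : ℚ) * (u ^ (m + 2) - u ^ (m + 3)) := by
          simp only [Nat.sub_self, p_zero]
          ring
        have main : ∀ j ∈ range (m + 1),
            (1 - u) * (PowerSeries.C (R := ℚ) (catalan j : ℚ) * u ^ (j + 1) * p (m + 1 - j))
            = PowerSeries.C (R := ℚ) (catalan j : ℚ) * u ^ (j + 1) * p (m - j)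
              - PowerSeries.C (R := ℚ) ((catalan j : ℚ) * (catalan (m + 1 - j) : ℚ)) * u ^ (m + 3) := by
          intro j hj
          rw [Finset.mem_range] at hj
          rw [show m + 1 - j = m - j + 1 from by omega]
          have hr := R1 (m - j)
          rw [Dq_diag] at hr
          have hupow : u ^ (j + 1) * u ^ (m - j + 2) = u ^ (m + 3) := by
            rw [← pow_add]; congr 1; omega
          rw [map_mul]
          linear_combination (PowerSeries.C (R := ℚ) (catalan j : ℚ) * u ^ (j + 1)) * hr
            - (PowerSeries.C (R := ℚ) (catalan j : ℚ)
                * PowerSeries.C (R := ℚ) (catalan (m - j + 1) : ℚ)) * hupow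
        rw [Finset.sum_congr rfl main, last, Finset.sum_sub_distrib]
      have conv : (catalan (m + 2) : ℚ)
          = ∑ j ∈ range (m + 2), (catalan j : ℚ) * (catalan (m + 1 - j) : ℚ) := by
        have h := catalan_succ' (m + 1)
        rw [Finset.Nat.sum_antidiagonal_eq_sum_range_succ_mk] at h
        exact_mod_cast h
      have conv' : ∑ j ∈ range (m + 1), (catalan j : ℚ) * (catalan (m + 1 - j) : ℚ)
          = (catalan (m + 2) : ℚ) - (catalan (m + 1) : ℚ) := by
        rw [Finset.sum_range_succ] at conv
        simp only [Nat.sub_self, catalan_zero, Nat.cast_one, mul_one] at conv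
        linarith [conv]
      have conv2 : ∑ j ∈ range (m + 1),
            PowerSeries.C (R := ℚ) ((catalan j : ℚ) * (catalan (m + 1 - j) : ℚ)) * u ^ (m + 3)
          = (PowerSeries.C (R := ℚ) (catalan (m + 2) : ℚ)
              - PowerSeries.C (R := ℚ) (catalan (m + 1) : ℚ)) * u ^ (m + 3) := by
        rw [← Finset.sum_mul, ← map_sum, conv', map_sub]
      have e5 : (1 - u) * (p (m + 1)
            + ∑ j ∈ range (m + 2), PowerSeries.C (R := ℚ) (catalan j : ℚ) * u ^ (j + 1) * p (m + 1 - j))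
          = p m + ∑ j ∈ range (m + 1), PowerSeries.C (R := ℚ) (catalan j : ℚ) * u ^ (j + 1) * p (m - j)
            - PowerSeries.C (R := ℚ) (catalan (m + 2) : ℚ) * u ^ (m + 3) := by
        linear_combination hR1 + sum1 - conv2
      linear_combination hR2 - e5 + ih




/-- convolution of the `p`s -/
def A (m : ℕ) : PowerSeries ℚ := ∑ j ∈ range m, p j * p (m - 1 - j)

lemma T (m : ℕ) : p (m + 1) = (u - 1) * A (m + 1) + 2 * p m + A m := by
  have hL : p (m + 1) = p m
      + ((∑ j ∈ range m, PowerSeries.C (R := ℚ) (catalan (j + 1) : ℚ) * u ^ (j + 1 + 1) * p (m - 1 - j))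
          + u * p m) := by
    have h := Ldagger m
    rw [Finset.sum_range_succ'] at h
    rw [h]
    congr 1
    congr 1
    · refine Finset.sum_congr rfl fun j hj => ?_
      rw [show m - (j + 1) = m - 1 - j from by omega]
    · simp
  have key : (1 - u) * A (m + 1)
      = A m - (∑ j ∈ range m, PowerSeries.C (R := ℚ) (catalan (j + 1) : ℚ) * u ^ (j + 1 + 1)
          * p (m - 1 - j)) + (1 - u) * p m := by
    have hA : A (m + 1) = ∑ j ∈ range (m + 1), p j * p (m - j) := by
      unfold A
      rfl
    rw [hA, Finset.mul_sum, Finset.sum_range_succ']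
    have main : ∀ j ∈ range m, (1 - u) * (p (j + 1) * p (m - (j + 1)))
        = p j * p (m - 1 - j)
          - PowerSeries.C (R := ℚ) (catalan (j + 1) : ℚ) * u ^ (j + 1 + 1) * p (m - 1 - j) := by
      intro j hj
      rw [show m - (j + 1) = m - 1 - j from by omega]
      have hr := R1 j
      rw [Dq_diag] at hr
      linear_combination p (m - 1 - j) * hr
    rw [Finset.sum_congr rfl main, Finset.sum_sub_distrib]
    simp only [Nat.sub_zero, p_zero, one_mul]
    rw [show (∑ j ∈ range m, p j * p (m - 1 - j)) = A m from rfl]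
  linear_combination key + hL


lemma u_sub_one : u - 1 = PowerSeries.X := by simp [u]

lemma coeff_u_pow (s k : ℕ) : PowerSeries.coeff (R := ℚ) k (u ^ s) = (s.choose k : ℚ) := by
  have h : u = ((1 + Polynomial.X : Polynomial ℚ) : PowerSeries ℚ) := by
    rw [u, Polynomial.coe_add, Polynomial.coe_one, Polynomial.coe_X]
  rw [h, ← Polynomial.coe_pow, Polynomial.coeff_coe, Polynomial.coeff_one_add_X_pow]

lemma g_zero : (PowerSeries.mk fun k => (fCoeff 0 k : ℚ)) = 1 := by
  ext k
  simp only [coeff_mk, fCoeff]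
  cases k with
  | zero => simp
  | succ k => simp [PowerSeries.coeff_one]

lemma g_succ (n : ℕ) : (PowerSeries.mk fun k => (fCoeff (n + 1) k : ℚ)) = p n := by
  ext k
  rw [PowerSeries.coeff_mk, p, map_sum]
  simp only [PowerSeries.coeff_C_mul, coeff_u_pow]
  by_cases hk : k ≤ n
  · have hf : fCoeff (n + 1) k = borelTriangle n k := by
      simp [fCoeff, hk]
    rw [hf, borelTriangle, Nat.cast_sum]
    rw [show Finset.Icc k n = Finset.filter (fun s => k ≤ s) (range (n + 1)) from by
      ext s; simp [Finset.mem_Icc, Nat.lt_succ_iff, and_comm]]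
    rw [Finset.sum_filter]
    refine Finset.sum_congr rfl fun s hs => ?_
    rw [Finset.mem_range, Nat.lt_succ_iff] at hs
    by_cases hks : k ≤ s
    · rw [if_pos hks, Nat.cast_mul, catalanTriangle_cast n s hs]
      ring
    · rw [if_neg hks, Nat.choose_eq_zero_of_lt (by omega), Nat.cast_zero, mul_zero]
  · have hf : fCoeff (n + 1) k = 0 := by
      simp only [fCoeff, Nat.add_sub_cancel]
      rw [if_neg (by omega), if_neg (by omega)]
    rw [hf]
    rw [eq_comm]
    refine Finset.sum_eq_zero fun s hs => ?_
    rw [Finset.mem_range, Nat.lt_succ_iff] at hs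
    rw [Nat.choose_eq_zero_of_lt (by omega), Nat.cast_zero, mul_zero]

lemma coeff_F (n : ℕ) :
    PowerSeries.coeff (R := PowerSeries ℚ) n F = if n = 0 then 1 else p (n - 1) := by
  rw [F, PowerSeries.coeff_mk]
  cases n with
  | zero => simpa using g_zero
  | succ n => simpa using g_succ n

lemma coeff_F_sub_one (n : ℕ) :
    PowerSeries.coeff (R := PowerSeries ℚ) n (F - 1) = if n = 0 then 0 else p (n - 1) := by
  rw [map_sub, coeff_F, PowerSeries.coeff_one]
  cases n <;> simp

lemma S1 (m : ℕ) :
    ∑ i ∈ range (m + 2 + 1), (if i = 0 then (0 : PowerSeries ℚ) else p (i - 1)) *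
      (if m + 2 - i = 0 then 0 else p (m + 2 - i - 1)) = A (m + 1) := by
  rw [Finset.sum_range_succ, Finset.sum_range_succ']
  have main : ∀ j ∈ range (m + 1),
      (if j + 1 = 0 then (0 : PowerSeries ℚ) else p (j + 1 - 1)) *
        (if m + 2 - (j + 1) = 0 then 0 else p (m + 2 - (j + 1) - 1))
      = p j * p (m + 1 - 1 - j) := by
    intro j hj
    rw [Finset.mem_range] at hj
    rw [if_neg (by omega), if_neg (by omega),
      show j + 1 - 1 = j from rfl, show m + 2 - (j + 1) - 1 = m + 1 - 1 - j from by omega]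
  rw [Finset.sum_congr rfl main]
  simp
  rfl

lemma S2 (m : ℕ) :
    ∑ i ∈ range (m + 1 + 1), (if i = 0 then (1 : PowerSeries ℚ) else p (i - 1)) *
      (if m + 1 - i = 0 then 1 else p (m + 1 - i - 1)) = 2 * p m + A m := by
  rw [Finset.sum_range_succ, Finset.sum_range_succ']
  have main : ∀ j ∈ range m,
      (if j + 1 = 0 then (1 : PowerSeries ℚ) else p (j + 1 - 1)) *
        (if m + 1 - (j + 1) = 0 then 1 else p (m + 1 - (j + 1) - 1))
      = p j * p (m - 1 - j) := by
    intro j hj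
    rw [Finset.mem_range] at hj
    rw [if_neg (by omega), if_neg (by omega),
      show j + 1 - 1 = j from rfl, show m + 1 - (j + 1) - 1 = m - 1 - j from by omega]
  rw [Finset.sum_congr rfl main]
  simp [show (∑ j ∈ range m, p j * p (m - 1 - j)) = A m from rfl]
  ring

theorem F_quadratic' :
    F - 1 - PowerSeries.C (R := PowerSeries ℚ) PowerSeries.X * (F - 1) ^ 2
      - PowerSeries.X * F ^ 2 = 0 := by
  refine PowerSeries.ext fun n => ?_
  rw [map_sub, map_sub, PowerSeries.coeff_C_mul, map_zero]
  rw [pow_two, pow_two]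
  cases n with
  | zero =>
      rw [PowerSeries.coeff_zero_X_mul, coeff_F_sub_one]
      have h0 : PowerSeries.coeff (R := PowerSeries ℚ) 0 ((F - 1) * (F - 1)) = 0 := by
        rw [PowerSeries.coeff_zero_eq_constantCoeff, map_mul,
          ← PowerSeries.coeff_zero_eq_constantCoeff, coeff_F_sub_one]
        simp
      rw [h0]
      simp
  | succ n =>
      rw [PowerSeries.coeff_succ_X_mul, coeff_F_sub_one, if_neg (Nat.succ_ne_zero n)]
      rw [PowerSeries.coeff_mul, PowerSeries.coeff_mul,
        Finset.Nat.sum_antidiagonal_eq_sum_range_succ_mk,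
        Finset.Nat.sum_antidiagonal_eq_sum_range_succ_mk]
      simp only [coeff_F_sub_one, coeff_F]
      cases n with
      | zero =>
          norm_num [Finset.sum_range_succ, p_zero]
      | succ m =>
          rw [show (m + 1 + 1).succ = m + 2 + 1 from rfl,
            show (m + 1).succ = m + 1 + 1 from rfl]
          rw [show m + 1 + 1 = m + 2 from rfl]
          rw [S1 m, S2 m]
          have hT := T m
          rw [u_sub_one] at hT
          rw [show m + 2 - 1 = m + 1 from rfl]
          linear_combination hT

end
end FQuad

/-- `F` satisfies the quadratic equation `(x + t) F² - (2t + 1) F + (t + 1) = 0`. -/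
theorem F_quadratic :
    (PowerSeries.X + PowerSeries.C (R := PowerSeries ℚ) PowerSeries.X) * F ^ 2
        - (2 * PowerSeries.C (R := PowerSeries ℚ) PowerSeries.X + 1) * F
        + (PowerSeries.C (R := PowerSeries ℚ) PowerSeries.X + 1)
      = 0 := by
  linear_combination -FQuad.F_quadratic'
end

section
/- For all integers 0 ≤ k ≤ n, the number of binary trees on n+1 vertices with k marked vertices such that no marked vertex lies on the right spine equals B_{n,k}. Equivalently, Σ_T binom((n+1) − rs(T), k) = B_{n,k}, the sum being over all binary trees T with exactly n+1 vertices, where rs(T) is the number of vertices on the right spine of T. -/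
/-- The positions (paths from the root, `false` = go left, `true` = go right) of all vertices
of a binary tree.  A vertex lies on the right spine exactly when its position contains no
`false` step. -/
def BinTree.vertexPos : BinTree → List (List Bool)
  | .nil => []
  | .node l r =>
      ([] : List Bool) :: (l.vertexPos.map (List.cons false) ++ r.vertexPos.map (List.cons true))

def treesList : ℕ → List BinTree
  | 0 => [.nil]
  | n+1 => (List.range (n+1)).attach.flatMap fun a =>
      (treesList a.1).flatMap fun l => (treesList (n - a.1)).map (.node l)
  decreasing_by
  · exact Nat.lt_succ_of_le (Nat.sub_le n a.1)
  · exact Nat.lt_succ_of_le (Nat.le_of_lt_succ (List.mem_range.mp a.2))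

theorem mem_treesList' (n : ℕ) : ∀ T : BinTree, T ∈ treesList n ↔ T.size = n := by
  induction n using Nat.strong_induction_on with
  | _ n ih =>
    intro T
    match n with
    | 0 =>
      simp only [treesList]
      cases T <;> simp [BinTree.size]
    | n+1 =>
      simp only [treesList, List.mem_flatMap, List.mem_attach, List.mem_map, true_and,
        Subtype.exists, List.mem_range]
      constructor
      · rintro ⟨a, ha, l, hl, r, hr, rfl⟩
        have h1 := (ih a ha l).mp hl
        have h2 := (ih (n - a) (Nat.lt_succ_of_le (Nat.sub_le n a)) r).mp hr
        simp [BinTree.size, h1, h2]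
        omega
      · intro hT
        cases T with
        | nil => simp [BinTree.size] at hT
        | node l r =>
          simp [BinTree.size] at hT
          refine ⟨l.size, by omega, l, (ih _ (by omega) l).mpr rfl, r, (ih _ (by omega) r).mpr ?_, rfl⟩
          omega

theorem mem_treesList {T : BinTree} {n : ℕ} : T ∈ treesList n ↔ T.size = n :=
  mem_treesList' n T

theorem vertexPos_length (T : BinTree) : T.vertexPos.length = T.size := by
  induction T with
  | nil => rfl
  | node l r ihl ihr => simp only [BinTree.vertexPos, BinTree.size, List.length_cons, List.length_append, List.length_map, ihl, ihr]

theorem vertexPos_nodup (T : BinTree) : T.vertexPos.Nodup := by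
  induction T with
  | nil => exact List.nodup_nil
  | node l r ihl ihr =>
    simp only [BinTree.vertexPos, List.nodup_cons, List.mem_append, List.mem_map]
    refine ⟨?_, ?_⟩
    · rintro (⟨q, _, h⟩ | ⟨q, _, h⟩)
      · simp at h
      · simp at h
    · refine List.Nodup.append (ihl.map ?_) (ihr.map ?_) ?_
      · intro a b h; simpa using h
      · intro a b h; simpa using h
      · intro x hx hy
        simp only [List.mem_map] at hx hy
        obtain ⟨a, _, rfl⟩ := hx
        obtain ⟨b, _, h⟩ := hy
        simp at h

def off (T : BinTree) : ℕ := (T.vertexPos.filter (fun q => decide (false ∈ q))).length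

theorem off_nil : off .nil = 0 := rfl

theorem off_node (l r : BinTree) : off (.node l r) = l.size + off r := by
  simp only [off, BinTree.vertexPos, List.filter_cons, List.filter_append, List.filter_map]
  have h1 : (List.filter ((fun q => decide (false ∈ q)) ∘ List.cons false) l.vertexPos)
      = l.vertexPos := by
    apply List.filter_eq_self.mpr
    intro a _; simp
  have h2 : (List.filter ((fun q => decide (false ∈ q)) ∘ List.cons true) r.vertexPos)
      = List.filter (fun q => decide (false ∈ q)) r.vertexPos := by
    apply List.filter_congr
    intro a _; simp
  simp [h1, h2, vertexPos_length]

theorem off_le_size (T : BinTree) : off T ≤ T.size := by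
  induction T with
  | nil => simp [off_nil, BinTree.size]
  | node l r ihl ihr => simp only [off_node, BinTree.size]; omega

theorem off_lt_size (l r : BinTree) : off (.node l r) < (BinTree.node l r).size := by
  have := off_le_size r
  simp only [off_node, BinTree.size]
  omega

theorem size_eq_zero {T : BinTree} : T.size = 0 ↔ T = .nil := by
  cases T <;> simp [BinTree.size]

def treesFinset (n : ℕ) : Finset BinTree := (treesList n).toFinset

theorem mem_treesFinset {T : BinTree} {n : ℕ} : T ∈ treesFinset n ↔ T.size = n := by
  simp [treesFinset, mem_treesList]

def A (m s : ℕ) : ℕ := ((treesFinset m).filter (fun T => off T = s)).card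

theorem A_zero (m : ℕ) : A m 0 = 1 := by
  induction m with
  | zero =>
    have : (treesFinset 0).filter (fun T => off T = 0) = {.nil} := by
      ext T
      simp [mem_treesFinset, size_eq_zero]
      rintro rfl; rfl
    simp [A, this]
  | succ m ih =>
    have himg : (treesFinset (m+1)).filter (fun T => off T = 0)
        = ((treesFinset m).filter (fun T => off T = 0)).image (fun r => .node .nil r) := by
      ext T
      simp only [Finset.mem_filter, Finset.mem_image, mem_treesFinset]
      constructor
      · rintro ⟨hs, ho⟩
        cases T with
        | nil => simp [BinTree.size] at hs
        | node l r =>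
          rw [off_node] at ho
          have hl : l = .nil := size_eq_zero.mp (by omega)
          subst hl
          exact ⟨r, ⟨by simpa [BinTree.size] using hs, by omega⟩, rfl⟩
      · rintro ⟨r, ⟨hs, ho⟩, rfl⟩
        refine ⟨by simp [BinTree.size, hs], by simp [off_node, BinTree.size, ho]⟩
    rw [A, himg, Finset.card_image_of_injective _ (fun a b h => by injection h), ← A, ih]

def leftNil : BinTree → Bool
  | .node .nil _ => true
  | _ => false

def rightNode : BinTree → Bool
  | .node _ (.node _ _) => true
  | _ => false

def rchild : BinTree → BinTree
  | .node _ r => r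
  | .nil => .nil

def rotL : BinTree → BinTree
  | .node (.node l1 l2) r => .node l1 (.node l2 r)
  | T => T

def rotR : BinTree → BinTree
  | .node l1 (.node l2 r) => .node (.node l1 l2) r
  | T => T

theorem A_rec {m s : ℕ} (hs : 1 ≤ s) (hsm : s < m) :
    A m s = A (m-1) s + A m (s-1) := by
  classical
  set S := (treesFinset m).filter (fun T => off T = s) with hS
  have hsplit : (S.filter (fun T => leftNil T = true)).card
      + (S.filter (fun T => ¬ leftNil T = true)).card = S.card :=
    Finset.card_filter_add_card_filter_not _
  -- card of left-nil part = A (m-1) s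
  have h1 : (S.filter (fun T => leftNil T = true)).card = A (m-1) s := by
    apply Finset.card_nbij' (i := rchild) (j := fun T => BinTree.node .nil T)
    · intro T hT
      simp only [hS, Finset.mem_coe, Finset.mem_filter, mem_treesFinset] at hT
      obtain ⟨⟨hsize, hoff⟩, hln⟩ := hT
      cases T with
      | nil => simp [leftNil] at hln
      | node l r =>
        cases l with
        | node _ _ => simp [leftNil] at hln
        | nil =>
          simp only [Finset.mem_coe, Finset.mem_filter, mem_treesFinset, rchild]
          rw [off_node] at hoff
          simp only [BinTree.size] at hsize
          constructor
          · omega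
          · simpa [BinTree.size] using hoff
    · intro T hT
      simp only [Finset.mem_coe, Finset.mem_filter, mem_treesFinset] at hT
      simp only [hS, Finset.mem_coe, Finset.mem_filter, mem_treesFinset, leftNil]
      refine ⟨⟨?_, ?_⟩, trivial⟩
      · simp [BinTree.size]; omega
      · simp [off_node, BinTree.size, hT.2]
    · intro T hT
      simp only [hS, Finset.mem_coe, Finset.mem_filter] at hT
      cases T with
      | nil => simp [leftNil] at hT
      | node l r =>
        cases l with
        | node _ _ => simp [leftNil] at hT
        | nil => rfl
    · intro T _; rfl
  -- card of left-node part = A m (s-1)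
  have h2 : (S.filter (fun T => ¬ leftNil T = true)).card = A m (s-1) := by
    have hempty : ((treesFinset m).filter (fun T => off T = s - 1)).filter
        (fun T => ¬ rightNode T = true) = ∅ := by
      apply Finset.filter_false_of_mem
      intro T hT
      simp only [Finset.mem_coe, Finset.mem_filter, mem_treesFinset] at hT
      obtain ⟨hsize, hoff⟩ := hT
      cases T with
      | nil => exfalso; simp [BinTree.size] at hsize; omega
      | node l r =>
        cases r with
        | node _ _ => simp [rightNode]
        | nil =>
          exfalso
          simp only [BinTree.size, off_node, off_nil] at hsize hoff
          omega
    have hsplit2 : (((treesFinset m).filter (fun T => off T = s-1)).filter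
          (fun T => rightNode T = true)).card
        + (((treesFinset m).filter (fun T => off T = s-1)).filter
          (fun T => ¬ rightNode T = true)).card
        = ((treesFinset m).filter (fun T => off T = s-1)).card :=
      Finset.card_filter_add_card_filter_not _
    rw [hempty] at hsplit2
    simp only [Finset.card_empty, add_zero] at hsplit2
    rw [A, ← hsplit2]
    apply Finset.card_nbij' (i := rotL) (j := rotR)
    · intro T hT
      simp only [hS, Finset.mem_coe, Finset.mem_filter, mem_treesFinset] at hT
      obtain ⟨⟨hsize, hoff⟩, hln⟩ := hT
      cases T with
      | nil => simp [BinTree.size] at hsize; omega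
      | node l r =>
        cases l with
        | nil => simp [leftNil] at hln
        | node l1 l2 =>
          rw [Finset.mem_coe, Finset.mem_filter, Finset.mem_filter]
          simp only [Finset.mem_coe, Finset.mem_filter, mem_treesFinset, rotL, rightNode]
          simp only [BinTree.size, off_node] at hsize hoff ⊢
          refine ⟨⟨by omega, by omega⟩, trivial⟩
    · intro T hT
      simp only [Finset.mem_coe, Finset.mem_filter, mem_treesFinset] at hT
      obtain ⟨⟨hsize, hoff⟩, hrn⟩ := hT
      cases T with
      | nil => simp [rightNode] at hrn
      | node l r =>
        cases r with
        | nil => simp [rightNode] at hrn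
        | node l2 r2 =>
          simp only [hS, Finset.mem_coe, Finset.mem_filter, mem_treesFinset, rotR, leftNil]
          simp only [BinTree.size, off_node] at hsize hoff ⊢
          refine ⟨⟨by omega, by omega⟩, by simp [leftNil]⟩
    · intro T hT
      simp only [hS, Finset.mem_coe, Finset.mem_filter, mem_treesFinset] at hT
      obtain ⟨⟨hsize, hoff⟩, hln⟩ := hT
      cases T with
      | nil => simp [BinTree.size] at hsize; omega
      | node l r =>
        cases l with
        | nil => simp [leftNil] at hln
        | node l1 l2 => rfl
    · intro T hT
      simp only [Finset.mem_coe, Finset.mem_filter] at hT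
      obtain ⟨-, hrn⟩ := hT
      cases T with
      | nil => simp [rightNode] at hrn
      | node l r =>
        cases r with
        | nil => simp [rightNode] at hrn
        | node l2 r2 => rfl
  rw [A, ← hsplit, h1, h2, Nat.add_comm]

theorem choose_succ_le {N k : ℕ} (h : N ≤ 2*k+1) : N.choose (k+1) ≤ N.choose k := by
  have key : N.choose (k+1) * (k+1) = N.choose k * (N - k) := Nat.choose_succ_right_eq N k
  have h2 : N.choose k * (N - k) ≤ N.choose k * (k+1) :=
    Nat.mul_le_mul_left _ (by omega)
  have := key ▸ h2
  exact Nat.le_of_mul_le_mul_right this (Nat.succ_pos k)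

/-- `A (n+1) s = C(n+s,n) - C(n+s,n+1)` for `s ≤ n+1`. -/
theorem A_eq_diff : ∀ n : ℕ, ∀ s : ℕ, s ≤ n + 1 →
    A (n+1) s = (n+s).choose n - (n+s).choose (n+1) := by
  intro n
  induction n using Nat.strong_induction_on with
  | _ n ih =>
    intro s
    induction s with
    | zero =>
      intro _
      simp [A_zero, Nat.choose_self, Nat.choose_succ_self]
    | succ t iht =>
      intro hts
      by_cases hmax : t + 1 = n + 1
      · -- s = n+1 : both sides are 0
        have h0 : A (n+1) (t+1) = 0 := by
          rw [A, Finset.card_eq_zero]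
          apply Finset.filter_false_of_mem
          intro T hT
          rw [mem_treesFinset] at hT
          cases T with
          | nil => simp [BinTree.size] at hT
          | node l r =>
            have := off_lt_size l r
            omega
        rw [h0, hmax]
        have hsymm := Nat.choose_symm (n := n + (n+1)) (k := n+1) (by omega)
        rw [show n + (n+1) - (n+1) = n from by omega] at hsymm
        omega
      · have ht : t + 1 ≤ n := by omega
        rw [A_rec (Nat.succ_pos t) (by omega)]
        have hn1 : 1 ≤ n := by omega
        have hihn : A n (t+1) = (n-1+(t+1)).choose (n-1) - (n-1+(t+1)).choose n := by
          have := ih (n-1) (by omega) (t+1) (by omega)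
          rwa [Nat.sub_add_cancel hn1] at this
        have hiht : A (n+1) t = (n+t).choose n - (n+t).choose (n+1) := iht (by omega)
        simp only [Nat.add_sub_cancel, Nat.succ_sub_one, hihn, hiht]
        rw [show n - 1 + (t+1) = n + t from by omega] at hihn ⊢
        set a := (n+t).choose (n-1) with ha
        set b := (n+t).choose n with hb
        set c := (n+t).choose (n+1) with hc
        have e1 : (n+(t+1)).choose n = a + b := by
          rw [show n + (t+1) = (n+t) + 1 from by omega,
            show n = (n-1) + 1 from by omega, Nat.choose_succ_succ,
            Nat.succ_eq_add_one, show n - 1 + 1 = n from by omega]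
        have e2 : (n+(t+1)).choose (n+1) = b + c := by
          rw [show n + (t+1) = (n+t) + 1 from by omega, Nat.choose_succ_succ]
        have hba : b ≤ a := by
          have := choose_succ_le (N := n+t) (k := n-1) (by omega)
          rwa [show n - 1 + 1 = n from by omega] at this
        have hcb : c ≤ b := choose_succ_le (N := n+t) (k := n) (by omega)
        rw [e1, e2]
        omega

theorem cat_eq {n s : ℕ} (hs : s ≤ n) :
    catalanTriangle n s = (n+s).choose n - (n+s).choose (n+1) := by
  have key : (n+s).choose (n+1) * (n+1) = (n+s).choose n * s := by
    have := Nat.choose_succ_right_eq (n+s) n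
    rwa [show n + s - n = s from by omega] at this
  have hle : (n+s).choose (n+1) ≤ (n+s).choose n := choose_succ_le (by omega)
  have hnum : (n - s + 1) * (n+s).choose n
      = (n+1) * ((n+s).choose n - (n+s).choose (n+1)) := by
    calc (n - s + 1) * (n+s).choose n
        = (n + 1 - s) * (n+s).choose n := by rw [show n - s + 1 = n + 1 - s from by omega]
      _ = (n+1) * (n+s).choose n - s * (n+s).choose n := Nat.sub_mul _ _ _
      _ = (n+1) * (n+s).choose n - (n+1) * (n+s).choose (n+1) := by
          rw [mul_comm (n+1) ((n+s).choose (n+1)), key, mul_comm s ((n+s).choose n)]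
      _ = (n+1) * ((n+s).choose n - (n+s).choose (n+1)) := (Nat.mul_sub _ _ _).symm
  rw [catalanTriangle, hnum, Nat.mul_div_cancel_left _ (Nat.succ_pos n)]

theorem A_eq_cat {n s : ℕ} (hs : s ≤ n) : A (n+1) s = catalanTriangle n s := by
  rw [cat_eq hs, A_eq_diff n s (by omega)]

def offFinset (T : BinTree) : Finset (List Bool) :=
  (T.vertexPos.filter (fun q => decide (false ∈ q))).toFinset

theorem mem_offFinset {T : BinTree} {q : List Bool} :
    q ∈ offFinset T ↔ q ∈ T.vertexPos ∧ false ∈ q := by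
  simp [offFinset, List.mem_filter]

theorem card_offFinset (T : BinTree) : (offFinset T).card = off T := by
  rw [offFinset, List.toFinset_card_of_nodup ((vertexPos_nodup T).filter _)]
  rfl

/-- The number of binary trees on `n+1` vertices with `k` marked vertices, none of which lies
on the right spine (i.e. each marked vertex's position contains a `false` step), equals
`B_{n,k}`. -/
theorem card_spineMarkedBinTrees (n k : ℕ) (hk : k ≤ n) :
    Nat.card {p : BinTree × Finset (List Bool) // p.1.size = n + 1 ∧
        p.2.card = k ∧ ∀ q ∈ p.2, q ∈ p.1.vertexPos ∧ false ∈ q}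
      = borelTriangle n k := by
  classical
  set F : Finset (BinTree × Finset (List Bool)) :=
    (treesFinset (n+1)).biUnion
      (fun T => ((offFinset T).powersetCard k).image (fun S => (T, S))) with hF
  have memF : ∀ p : BinTree × Finset (List Bool), p ∈ F ↔ (p.1.size = n + 1 ∧
      p.2.card = k ∧ ∀ q ∈ p.2, q ∈ p.1.vertexPos ∧ false ∈ q) := by
    intro p
    simp only [hF, Finset.mem_biUnion, Finset.mem_image, Finset.mem_powersetCard,
      mem_treesFinset]
    constructor
    · rintro ⟨T, hT, S, ⟨hsub, hcard⟩, rfl⟩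
      exact ⟨hT, hcard, fun q hq => mem_offFinset.mp (hsub hq)⟩
    · rintro ⟨hsize, hcard, hall⟩
      exact ⟨p.1, hsize, p.2, ⟨fun q hq => mem_offFinset.mpr (hall q hq), hcard⟩,
        Prod.mk.eta⟩
  have hcard1 : Nat.card {p : BinTree × Finset (List Bool) // p.1.size = n + 1 ∧
      p.2.card = k ∧ ∀ q ∈ p.2, q ∈ p.1.vertexPos ∧ false ∈ q} = F.card := by
    rw [← Nat.card_eq_finsetCard F]
    exact Nat.card_congr (Equiv.subtypeEquivRight (fun p => (memF p).symm))
  have hcard2 : F.card = ∑ T ∈ treesFinset (n+1), (off T).choose k := by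
    rw [hF, Finset.card_biUnion]
    · apply Finset.sum_congr rfl
      intro T _
      rw [Finset.card_image_of_injective _ (fun a b h => by injection h),
        Finset.card_powersetCard, card_offFinset]
    · intro x _ y _ hxy
      simp only [Finset.disjoint_left, Finset.mem_image]
      rintro p ⟨S, _, rfl⟩ ⟨S', _, h⟩
      exact hxy (congrArg Prod.fst h).symm
  have hcard3 : ∑ T ∈ treesFinset (n+1), (off T).choose k
      = ∑ s ∈ Finset.range (n+1), A (n+1) s * s.choose k := by
    rw [Finset.sum_comp (fun s => s.choose k) off]
    have hsub : (treesFinset (n+1)).image off ⊆ Finset.range (n+1) := by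
      intro s hs
      simp only [Finset.mem_image, mem_treesFinset] at hs
      obtain ⟨T, hT, rfl⟩ := hs
      rw [Finset.mem_range]
      cases T with
      | nil => simp [BinTree.size] at hT
      | node l r => have := off_lt_size l r; omega
    have hzero : ∀ s ∈ Finset.range (n+1), s ∉ (treesFinset (n+1)).image off →
        (Finset.filter (fun T => off T = s) (treesFinset (n+1))).card • s.choose k = 0 := by
      intro s _ hs
      simp only [Finset.mem_image] at hs
      have he : (Finset.filter (fun T => off T = s) (treesFinset (n+1))) = ∅ := by
        apply Finset.filter_false_of_mem
        intro T hT h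
        exact hs ⟨T, hT, h⟩
      simp [he]
    rw [Finset.sum_subset hsub hzero]
    apply Finset.sum_congr rfl
    intro s _
    rw [A, smul_eq_mul]
  have hcard4 : ∑ s ∈ Finset.range (n+1), A (n+1) s * s.choose k
      = borelTriangle n k := by
    rw [borelTriangle, ← Finset.sum_subset
      (show Finset.Icc k n ⊆ Finset.range (n+1) by
        intro s hs; rw [Finset.mem_range]; rw [Finset.mem_Icc] at hs; omega)]
    · apply Finset.sum_congr rfl
      intro s hs
      rw [Finset.mem_Icc] at hs
      rw [A_eq_cat hs.2, mul_comm]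
    · intro s hsr hsi
      rw [Finset.mem_range] at hsr
      rw [Finset.mem_Icc] at hsi
      have : s < k := by omega
      rw [Nat.choose_eq_zero_of_lt this, mul_zero]
  rw [hcard1, hcard2, hcard3, hcard4]
end
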